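/- arXiv:2503.02742 — 8 statements merged into one kernel-verified Lean document; each statement's English description precedes it below -/
import Mathlib

section
/- Let Ψ : [0,∞)² → [0,∞) satisfy (Ψ1)–(Ψ4) and let Φ be the loading–unloading density built from Ψ. Then for every fixed z₁,z₂ > 0 the map y ↦ Φ(y,z) is continuously differentiable on (0,∞)², and its partial derivatives are given piecewise by: ∂_{y₁}Φ(y,z) = ∂₁Ψ(y₁,y₂) on R₁(z); ∂₁Ψ(z₁,y₂)·(y₁/z₁) on R₂(z); ∂₁Ψ(y₁,z₂) − (z₂/2)∂₁₂Ψ(y₁,z₂)(1−(y₂/z₂)²) on R₃(z); (∂₁Ψ(z₁,z₂) − (z₂/2)∂₁₂Ψ(z₁,z₂)(1−(y₂/z₂)²))·(y₁/z₁) on R₄(z); and symmetrically ∂_{y₂}Φ(y,z) = ∂₂Ψ(y₁,y₂) on R₁(z); ∂₂Ψ(z₁,y₂) − (z₁/2)∂₁₂Ψ(z₁,y₂)(1−(y₁/z₁)²) on R₂(z); ∂₂Ψ(y₁,z₂)·(y₂/z₂) on R₃(z); (∂₂Ψ(z₁,z₂) − (z₁/2)∂₁₂Ψ(z₁,z₂)(1−(y₁/z₁)²))·(y₂/z₂)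 on R₄(z). -/
open MeasureTheory Set

/-- A loading density `Ψ : [0,∞)² → [0,∞)` together with its partial derivatives
`Ψ₁, Ψ₂, Ψ₁₁, Ψ₂₂, Ψ₁₂, Ψ₁₁₂, Ψ₁₂₂`, satisfying assumptions (Ψ1)–(Ψ4). -/
structure LoadingDensity where
  Ψ : ℝ → ℝ → ℝ
  Ψ₁ : ℝ → ℝ → ℝ
  Ψ₂ : ℝ → ℝ → ℝ
  Ψ₁₁ : ℝ → ℝ → ℝ
  Ψ₂₂ : ℝ → ℝ → ℝ
  Ψ₁₂ : ℝ → ℝ → ℝ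
  Ψ₁₁₂ : ℝ → ℝ → ℝ
  Ψ₁₂₂ : ℝ → ℝ → ℝ
  /-- `Ψ` is `[0,∞)`-valued on the quadrant. -/
  nonneg : ∀ y₁ y₂ : ℝ, 0 ≤ y₁ → 0 ≤ y₂ → 0 ≤ Ψ y₁ y₂
  /-- (Ψ1) -/
  zero : Ψ 0 0 = 0
  /-- (Ψ2): boundedness. -/
  bounded : ∃ M : ℝ, ∀ y₁ y₂ : ℝ, 0 ≤ y₁ → 0 ≤ y₂ → Ψ y₁ y₂ ≤ M
  /-- (Ψ2): Lipschitz continuity. -/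
  lipschitz : ∃ L : ℝ, ∀ y₁ y₂ y₁' y₂' : ℝ, 0 ≤ y₁ → 0 ≤ y₂ → 0 ≤ y₁' → 0 ≤ y₂' →
    |Ψ y₁ y₂ - Ψ y₁' y₂'| ≤ L * (|y₁ - y₁'| + |y₂ - y₂'|)
  /-- `Ψ₁` is the first partial derivative of `Ψ` on `(0,∞)²`. -/
  hasDeriv₁ : ∀ y₁ y₂ : ℝ, 0 < y₁ → 0 < y₂ → HasDerivAt (fun t => Ψ t y₂) (Ψ₁ y₁ y₂) y₁
  /-- `Ψ₂` is the second partial derivative of `Ψ` on `(0,∞)²`. -/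
  hasDeriv₂ : ∀ y₁ y₂ : ℝ, 0 < y₁ → 0 < y₂ → HasDerivAt (fun t => Ψ y₁ t) (Ψ₂ y₁ y₂) y₂
  /-- `Ψ₁₂` is the mixed second partial derivative on `(0,∞)²`. -/
  hasDeriv₁₂ : ∀ y₁ y₂ : ℝ, 0 < y₁ → 0 < y₂ → HasDerivAt (fun t => Ψ₁ y₁ t) (Ψ₁₂ y₁ y₂) y₂
  /-- (Ψ2): `∇Ψ` and `∂₁₂Ψ` are locally Lipschitz on `(0,∞)²`. -/
  gradLocLip : ∀ K : Set (ℝ × ℝ), IsCompact K → K ⊆ Ioi (0:ℝ) ×ˢ Ioi (0:ℝ) →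
    ∃ L : ℝ, ∀ p ∈ K, ∀ q ∈ K,
      |Ψ₁ p.1 p.2 - Ψ₁ q.1 q.2| ≤ L * ‖p - q‖ ∧
      |Ψ₂ p.1 p.2 - Ψ₂ q.1 q.2| ≤ L * ‖p - q‖ ∧
      |Ψ₁₂ p.1 p.2 - Ψ₁₂ q.1 q.2| ≤ L * ‖p - q‖
  /-- a.e. second derivative `Ψ₁₁`. -/
  hasDeriv₁₁ : ∀ᵐ p ∂(volume : Measure (ℝ × ℝ)), 0 < p.1 → 0 < p.2 →
    HasDerivAt (fun t => Ψ₁ t p.2) (Ψ₁₁ p.1 p.2) p.1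
  /-- a.e. second derivative `Ψ₂₂`. -/
  hasDeriv₂₂ : ∀ᵐ p ∂(volume : Measure (ℝ × ℝ)), 0 < p.1 → 0 < p.2 →
    HasDerivAt (fun t => Ψ₂ p.1 t) (Ψ₂₂ p.1 p.2) p.2
  /-- a.e. third derivative `Ψ₁₁₂`. -/
  hasDeriv₁₁₂ : ∀ᵐ p ∂(volume : Measure (ℝ × ℝ)), 0 < p.1 → 0 < p.2 →
    HasDerivAt (fun t => Ψ₁₂ t p.2) (Ψ₁₁₂ p.1 p.2) p.1
  /-- a.e. third derivative `Ψ₁₂₂`. -/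
  hasDeriv₁₂₂ : ∀ᵐ p ∂(volume : Measure (ℝ × ℝ)), 0 < p.1 → 0 < p.2 →
    HasDerivAt (fun t => Ψ₁₂ p.1 t) (Ψ₁₂₂ p.1 p.2) p.2
  /-- (Ψ3): `∂ᵢΨ ≥ max(yᵢ∂ᵢᵢΨ,0)` and `∂₁₂Ψ ≤ min(yᵢ∂ᵢᵢⱼΨ,0)` a.e. on `[0,∞)²`. -/
  psi3 : ∀ᵐ p ∂(volume : Measure (ℝ × ℝ)), 0 ≤ p.1 → 0 ≤ p.2 →
    max (p.1 * Ψ₁₁ p.1 p.2) 0 ≤ Ψ₁ p.1 p.2 ∧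
    max (p.2 * Ψ₂₂ p.1 p.2) 0 ≤ Ψ₂ p.1 p.2 ∧
    Ψ₁₂ p.1 p.2 ≤ min (p.1 * Ψ₁₁₂ p.1 p.2) 0 ∧
    Ψ₁₂ p.1 p.2 ≤ min (p.2 * Ψ₁₂₂ p.1 p.2) 0
  /-- (Ψ4). -/
  psi4 : ∃ M : ℝ, ∀ y₁ y₂ : ℝ, 0 < y₁ → 0 < y₂ → (y₁ + y₂) * |Ψ₁₂ y₁ y₂| ≤ M

/-- The loading–unloading density `Φ` built from a loading density `Ψ`. -/
noncomputable def Phi (L : LoadingDensity) (y₁ y₂ z₁ z₂ : ℝ) : ℝ :=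
  if z₁ ≤ y₁ then
    if z₂ ≤ y₂ then L.Ψ y₁ y₂
    else L.Ψ y₁ z₂ - z₂ / 2 * L.Ψ₂ y₁ z₂ * (1 - (y₂ / z₂) ^ 2)
  else
    if z₂ ≤ y₂ then L.Ψ z₁ y₂ - z₁ / 2 * L.Ψ₁ z₁ y₂ * (1 - (y₁ / z₁) ^ 2)
    else L.Ψ z₁ z₂ - z₁ / 2 * L.Ψ₁ z₁ z₂ * (1 - (y₁ / z₁) ^ 2)
      - z₂ / 2 * L.Ψ₂ z₁ z₂ * (1 - (y₂ / z₂) ^ 2)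
      + z₁ * z₂ / 4 * L.Ψ₁₂ z₁ z₂ * (1 - (y₁ / z₁) ^ 2) * (1 - (y₂ / z₂) ^ 2)

/-- The first component of the gradient in `y` of the loading–unloading density `Φ`
(the cohesive tension in direction 1 of the potential-based model). -/
noncomputable def PhiY1 (L : LoadingDensity) (y₁ y₂ z₁ z₂ : ℝ) : ℝ :=
  if z₁ ≤ y₁ then
    if z₂ ≤ y₂ then L.Ψ₁ y₁ y₂
    else L.Ψ₁ y₁ z₂ - z₂ / 2 * L.Ψ₁₂ y₁ z₂ * (1 - (y₂ / z₂) ^ 2)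
  else
    if z₂ ≤ y₂ then L.Ψ₁ z₁ y₂ * (y₁ / z₁)
    else (L.Ψ₁ z₁ z₂ - z₂ / 2 * L.Ψ₁₂ z₁ z₂ * (1 - (y₂ / z₂) ^ 2)) * (y₁ / z₁)

/-- The second component of the gradient in `y` of the loading–unloading density `Φ`. -/
noncomputable def PhiY2 (L : LoadingDensity) (y₁ y₂ z₁ z₂ : ℝ) : ℝ :=
  if z₂ ≤ y₂ then
    if z₁ ≤ y₁ then L.Ψ₂ y₁ y₂
    else L.Ψ₂ z₁ y₂ - z₁ / 2 * L.Ψ₁₂ z₁ y₂ * (1 - (y₁ / z₁) ^ 2)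
  else
    if z₁ ≤ y₁ then L.Ψ₂ y₁ z₂ * (y₂ / z₂)
    else (L.Ψ₂ z₁ z₂ - z₁ / 2 * L.Ψ₁₂ z₁ z₂ * (1 - (y₁ / z₁) ^ 2)) * (y₂ / z₂)

/-! In each unloaded coordinate (`yᵢ < zᵢ`) the density `Φ(·, z)` replaces `Ψ` by a quadratic in
`yᵢ` that matches its value and slope at `yᵢ = zᵢ`, so each partial derivative of `Φ(·, z)` exists
by gluing the two one-sided derivatives across the line `yᵢ = zᵢ`. The one derivative this needs
that is not an assumption is `∂₁∂₂Ψ = ∂₁₂Ψ` (on `R₃`): Schwarz's theorem, proved by applying the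
mean value theorem twice and using only the continuity of `∂₁₂Ψ`, which, like that of `∇Ψ`, comes
from local Lipschitz continuity. Clamping `y` from below at `z` writes each partial derivative as
one continuous expression, and swapping the coordinates reduces `∂_{y₂}` to `∂_{y₁}`. -/

open Filter Topology Function

theorem exists_mem_uIcc_sub_eq_mul_sub {f f' : ℝ → ℝ} {a b : ℝ}
    (hf : ∀ x ∈ uIcc a b, HasDerivAt f (f' x) x) :
    ∃ c ∈ uIcc a b, f b - f a = f' c * (b - a) := by
  wlog hab : a ≤ b generalizing a b
  · obtain ⟨c, hc, h⟩ := this (uIcc_comm a b ▸ hf) (le_of_not_ge hab)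
    exact ⟨c, uIcc_comm a b ▸ hc, by linarith⟩
  rcases hab.eq_or_lt with rfl | hlt
  · exact ⟨a, left_mem_uIcc, by simp⟩
  rw [uIcc_of_le hab] at hf ⊢
  obtain ⟨c, hc, h⟩ := exists_hasDerivAt_eq_slope f f' hlt
    (fun x hx => (hf x hx).continuousAt.continuousWithinAt)
    (fun x hx => hf x (Ioo_subset_Icc_self hx))
  exact ⟨c, Ioo_subset_Icc_self hc, by rw [h, div_mul_cancel₀ _ (sub_ne_zero.2 hlt.ne')]⟩

theorem exists_mixed_difference_eq {f f₁ f₁₂ : ℝ → ℝ → ℝ} {a t b c : ℝ}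
    (h₁ : ∀ x ∈ uIcc a t, ∀ y ∈ uIcc b c, HasDerivAt (f · y) (f₁ x y) x)
    (h₁₂ : ∀ x ∈ uIcc a t, ∀ y ∈ uIcc b c, HasDerivAt (f₁ x ·) (f₁₂ x y) y) :
    ∃ ξ ∈ uIcc a t, ∃ η ∈ uIcc b c,
      f t c - f t b - (f a c - f a b) = f₁₂ ξ η * (t - a) * (c - b) := by
  obtain ⟨ξ, hξ, hξeq⟩ := exists_mem_uIcc_sub_eq_mul_sub (f := fun x => f x c - f x b)
    fun x hx => (h₁ x hx c right_mem_uIcc).sub (h₁ x hx b left_mem_uIcc)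
  obtain ⟨η, hη, hηeq⟩ := exists_mem_uIcc_sub_eq_mul_sub (h₁₂ ξ hξ)
  exact ⟨ξ, hξ, η, hη, by rw [hξeq, hηeq]; ring⟩

/-- Schwarz's theorem in the form that needs only the mixed partial `∂₂∂₁f` to be continuous. -/
theorem hasDerivAt_of_continuousAt_mixed {f f₁ f₂ f₁₂ : ℝ → ℝ → ℝ} {a b : ℝ}
    (h₁ : ∀ᶠ p in 𝓝 (a, b), HasDerivAt (f · p.2) (f₁ p.1 p.2) p.1)
    (h₂ : ∀ᶠ x in 𝓝 a, HasDerivAt (f x ·) (f₂ x b) b)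
    (h₁₂ : ∀ᶠ p in 𝓝 (a, b), HasDerivAt (f₁ p.1 ·) (f₁₂ p.1 p.2) p.2)
    (hc : ContinuousAt (uncurry f₁₂) (a, b)) :
    HasDerivAt (f₂ · b) (f₁₂ a b) a := by
  rw [hasDerivAt_iff_tendsto_slope, Metric.tendsto_nhdsWithin_nhds]
  intro ε hε
  obtain ⟨δ, hδ, hball⟩ := Metric.eventually_nhds_iff_ball.1 <|
    h₁.and <| h₁₂.and <| ((continuous_fst.tendsto (a, b)).eventually h₂).and <|
      hc.eventually (Metric.ball_mem_nhds _ (half_pos hε))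
  have hmem {x y : ℝ} (hx : dist x a < δ) (hy : dist y b < δ) :
      (x, y) ∈ Metric.ball (a, b) δ := by
    rw [Metric.mem_ball, Prod.dist_eq]; exact max_lt hx hy
  refine ⟨δ, hδ, fun t hta ht => ?_⟩
  have hlim : Tendsto (fun k => k⁻¹ * (f t (b + k) - f t b - (f a (b + k) - f a b)) / (t - a))
      (𝓝[≠] 0) (𝓝 (slope (f₂ · b) a t)) := by
    rw [slope_def_field]
    have hk := fun x (hx : dist x a < δ) =>
      (hball (x, b) (hmem hx (dist_self b ▸ hδ))).2.2.1.tendsto_slope_zero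
    refine (((hk t ht).sub (hk a (dist_self a ▸ hδ))).div_const (t - a)).congr fun k => ?_
    simp only [smul_eq_mul]; ring
  have hclose : ∀ᶠ k in 𝓝[≠] 0,
      dist (k⁻¹ * (f t (b + k) - f t b - (f a (b + k) - f a b)) / (t - a)) (f₁₂ a b) ≤ ε / 2 := by
    filter_upwards [self_mem_nhdsWithin,
      nhdsWithin_le_nhds (Metric.ball_mem_nhds (0 : ℝ) hδ)] with k hk0 hkδ
    have hk0 : k ≠ 0 := hk0
    have hdist {x y : ℝ} (hx : x ∈ uIcc a t) (hy : y ∈ uIcc b (b + k)) :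
        (x, y) ∈ Metric.ball (a, b) δ := by
      refine hmem ?_ ?_ <;> rw [dist_comm]
      · exact (Real.dist_left_le_of_mem_uIcc hx).trans_lt (by rwa [dist_comm])
      · exact (Real.dist_left_le_of_mem_uIcc hy).trans_lt (by simpa [Real.dist_eq] using hkδ)
    obtain ⟨ξ, hξ, η, hη, heq⟩ := exists_mixed_difference_eq (f := f)
      (fun x hx y hy => (hball _ (hdist hx hy)).1) (fun x hx y hy => (hball _ (hdist hx hy)).2.1)
    rw [heq, add_sub_cancel_left, show k⁻¹ * (f₁₂ ξ η * (t - a) * k) / (t - a) = f₁₂ ξ η by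
      field_simp [sub_ne_zero.2 (hta : t ≠ a)]]
    exact (hball _ (hdist hξ hη)).2.2.2.le
  exact (le_of_tendsto (hlim.dist tendsto_const_nhds) hclose).trans_lt (half_lt_self hε)

theorem HasDerivAt.ite_le {g h : ℝ → ℝ} {g' h' c x : ℝ} (hg : c ≤ x → HasDerivAt g g' x)
    (hh : x ≤ c → HasDerivAt h h' x) (hc : g c = h c) (hc' : x = c → g' = h') :
    HasDerivAt (fun t => if c ≤ t then g t else h t) (if c ≤ x then g' else h') x := by
  rcases lt_trichotomy x c with hx | rfl | hx
  · rw [if_neg hx.not_ge]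
    refine (hh hx.le).congr_of_eventuallyEq ?_
    filter_upwards [Iio_mem_nhds hx] with t ht
    rw [if_neg (not_le.2 ht)]
  · rw [if_pos le_rfl]
    have hright : HasDerivWithinAt (fun t => if x ≤ t then g t else h t) g' (Ici x) x :=
      (hg le_rfl).hasDerivWithinAt.congr (fun t ht => if_pos ht) (if_pos le_rfl)
    have hleft : HasDerivWithinAt (fun t => if x ≤ t then g t else h t) g' (Iic x) x := by
      refine (hc' rfl ▸ hh le_rfl).hasDerivWithinAt.congr (fun t ht => ?_) (by simp [hc])
      rcases (mem_Iic.1 ht).eq_or_lt with rfl | hlt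
      · simp [hc]
      · rw [if_neg hlt.not_ge]
    simpa using hleft.union hright
  · rw [if_pos hx.le]
    refine (hg hx.le).congr_of_eventuallyEq ?_
    filter_upwards [Ioi_mem_nhds hx] with t ht
    rw [if_pos ht.le]

theorem hasDerivAt_one_sub_div_sq (z t : ℝ) :
    HasDerivAt (fun t => 1 - (t / z) ^ 2) (-(2 / z) * (t / z)) t :=
  ((((hasDerivAt_id t).div_const z).pow 2).const_sub 1).congr_deriv (by simp; ring)

/-- `Phi L` and `PhiY1 L` are `unloading L.Ψ L.Ψ₁ L.Ψ₂ L.Ψ₁₂` and `unloadingDeriv L.Ψ₁ L.Ψ₁₂`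
by definition, and `PhiY2 L` is `unloadingDeriv` with the coordinates swapped; phrasing them for
arbitrary functions is what allows the swap. -/
noncomputable def unloading (ψ ψ₁ ψ₂ ψ₁₂ : ℝ → ℝ → ℝ) (y₁ y₂ z₁ z₂ : ℝ) : ℝ :=
  if z₁ ≤ y₁ then
    if z₂ ≤ y₂ then ψ y₁ y₂
    else ψ y₁ z₂ - z₂ / 2 * ψ₂ y₁ z₂ * (1 - (y₂ / z₂) ^ 2)
  else
    if z₂ ≤ y₂ then ψ z₁ y₂ - z₁ / 2 * ψ₁ z₁ y₂ * (1 - (y₁ / z₁) ^ 2)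
    else ψ z₁ z₂ - z₁ / 2 * ψ₁ z₁ z₂ * (1 - (y₁ / z₁) ^ 2)
      - z₂ / 2 * ψ₂ z₁ z₂ * (1 - (y₂ / z₂) ^ 2)
      + z₁ * z₂ / 4 * ψ₁₂ z₁ z₂ * (1 - (y₁ / z₁) ^ 2) * (1 - (y₂ / z₂) ^ 2)

noncomputable def unloadingDeriv (ψ₁ ψ₁₂ : ℝ → ℝ → ℝ) (y₁ y₂ z₁ z₂ : ℝ) : ℝ :=
  if z₁ ≤ y₁ then
    if z₂ ≤ y₂ then ψ₁ y₁ y₂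
    else ψ₁ y₁ z₂ - z₂ / 2 * ψ₁₂ y₁ z₂ * (1 - (y₂ / z₂) ^ 2)
  else
    if z₂ ≤ y₂ then ψ₁ z₁ y₂ * (y₁ / z₁)
    else (ψ₁ z₁ z₂ - z₂ / 2 * ψ₁₂ z₁ z₂ * (1 - (y₂ / z₂) ^ 2)) * (y₁ / z₁)

theorem unloading_swap (ψ ψ₁ ψ₂ ψ₁₂ : ℝ → ℝ → ℝ) (y₁ y₂ z₁ z₂ : ℝ) :
    unloading ψ ψ₁ ψ₂ ψ₁₂ y₁ y₂ z₁ z₂ =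
      unloading (swap ψ) (swap ψ₂) (swap ψ₁) (swap ψ₁₂) y₂ y₁ z₂ z₁ := by
  unfold unloading; simp only [swap]; split_ifs <;> ring

theorem hasDerivAt_unloading_fst {ψ ψ₁ ψ₂ ψ₁₂ : ℝ → ℝ → ℝ} {y₁ y₂ z₁ z₂ : ℝ}
    (h₁ : ∀ x y, 0 < x → 0 < y → HasDerivAt (ψ · y) (ψ₁ x y) x)
    (h₂₁ : ∀ x y, 0 < x → 0 < y → HasDerivAt (ψ₂ · y) (ψ₁₂ x y) x)
    (hz₁ : 0 < z₁) (hz₂ : 0 < z₂) (hy₁ : 0 < y₁) (hy₂ : 0 < y₂) :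
    HasDerivAt (unloading ψ ψ₁ ψ₂ ψ₁₂ · y₂ z₁ z₂) (unloadingDeriv ψ₁ ψ₁₂ y₁ y₂ z₁ z₂) y₁ := by
  have hq := hasDerivAt_one_sub_div_sq z₁ y₁
  by_cases hy : z₂ ≤ y₂
  · simp only [unloading, unloadingDeriv, hy, if_true]
    refine .ite_le (fun _ => h₁ _ _ hy₁ hy₂) (fun _ =>
      ((hq.const_mul (z₁ / 2 * ψ₁ z₁ y₂)).const_sub (ψ z₁ y₂)).congr_deriv ?_) ?_ ?_
    · field_simp
    · simp [hz₁.ne']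
    · rintro rfl; simp [hz₁.ne']
  · simp only [unloading, unloadingDeriv, hy, if_false]
    refine .ite_le
      (fun _ => (h₁ _ _ hy₁ hz₂).sub (((h₂₁ _ _ hy₁ hz₂).const_mul (z₂ / 2)).mul_const _))
      (fun _ => ((((hq.const_mul (z₁ / 2 * ψ₁ z₁ z₂)).const_sub (ψ z₁ z₂)).sub_const _).add
        ((hq.const_mul (z₁ * z₂ / 4 * ψ₁₂ z₁ z₂)).mul_const _)).congr_deriv ?_) ?_ ?_
    · field_simp; ring
    · simp [hz₁.ne']
    · rintro rfl; simp [hz₁.ne']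

theorem hasDerivAt_unloading_snd {ψ ψ₁ ψ₂ ψ₁₂ : ℝ → ℝ → ℝ} {y₁ y₂ z₁ z₂ : ℝ}
    (h₂ : ∀ x y, 0 < x → 0 < y → HasDerivAt (ψ x ·) (ψ₂ x y) y)
    (h₁₂ : ∀ x y, 0 < x → 0 < y → HasDerivAt (ψ₁ x ·) (ψ₁₂ x y) y)
    (hz₁ : 0 < z₁) (hz₂ : 0 < z₂) (hy₁ : 0 < y₁) (hy₂ : 0 < y₂) :
    HasDerivAt (unloading ψ ψ₁ ψ₂ ψ₁₂ y₁ · z₁ z₂)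
      (unloadingDeriv (swap ψ₂) (swap ψ₁₂) y₂ y₁ z₂ z₁) y₂ := by
  convert hasDerivAt_unloading_fst (ψ := swap ψ) (ψ₂ := swap ψ₁)
    (fun x y hx hy => h₂ y x hy hx) (fun x y hx hy => h₁₂ y x hy hx) hz₂ hz₁ hy₂ hy₁ using 1
  exact funext fun t => unloading_swap ψ ψ₁ ψ₂ ψ₁₂ y₁ t z₁ z₂

theorem unloadingDeriv_eq_clamp (ψ₁ ψ₁₂ : ℝ → ℝ → ℝ) {z₁ z₂ : ℝ} (hz₁ : 0 < z₁) (hz₂ : 0 < z₂)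
    (y₁ y₂ : ℝ) :
    unloadingDeriv ψ₁ ψ₁₂ y₁ y₂ z₁ z₂ =
      (ψ₁ (max y₁ z₁) (max y₂ z₂) - z₂ / 2 * ψ₁₂ (max y₁ z₁) z₂ * (1 - min (y₂ / z₂) 1 ^ 2))
        * min (y₁ / z₁) 1 := by
  unfold unloadingDeriv
  rcases le_or_gt z₁ y₁ with h₁ | h₁ <;> rcases le_or_gt z₂ y₂ with h₂ | h₂ <;>
    simp [h₁, h₂, le_of_lt, not_le_of_gt, one_le_div, div_le_one, hz₁, hz₂]

theorem continuous_unloadingDeriv {ψ₁ ψ₁₂ : ℝ → ℝ → ℝ} {z₁ z₂ : ℝ}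
    (hψ₁ : ContinuousOn (uncurry ψ₁) (Ioi 0 ×ˢ Ioi 0))
    (hψ₁₂ : ContinuousOn (uncurry ψ₁₂) (Ioi 0 ×ˢ Ioi 0)) (hz₁ : 0 < z₁) (hz₂ : 0 < z₂) :
    Continuous fun p : ℝ × ℝ => unloadingDeriv ψ₁ ψ₁₂ p.1 p.2 z₁ z₂ := by
  simp only [unloadingDeriv_eq_clamp ψ₁ ψ₁₂ hz₁ hz₂]
  have hψ₁' : Continuous fun p : ℝ × ℝ => ψ₁ (max p.1 z₁) (max p.2 z₂) :=
    hψ₁.comp_continuous (f := fun p : ℝ × ℝ => (max p.1 z₁, max p.2 z₂)) (by fun_prop)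
      fun _ => ⟨lt_max_of_lt_right hz₁, lt_max_of_lt_right hz₂⟩
  have hψ₁₂' : Continuous fun p : ℝ × ℝ => ψ₁₂ (max p.1 z₁) z₂ :=
    hψ₁₂.comp_continuous (f := fun p : ℝ × ℝ => (max p.1 z₁, z₂)) (by fun_prop)
      fun _ => ⟨lt_max_of_lt_right hz₁, hz₂⟩
  exact (hψ₁'.sub ((continuous_const.mul hψ₁₂').mul (by fun_prop))).mul (by fun_prop)

theorem continuousOn_of_lipschitzOn_isCompact {X : Type*} [PseudoMetricSpace X]
    [LocallyCompactSpace X] {f : X → ℝ} {U : Set X} (hU : IsOpen U)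
    (hf : ∀ K, IsCompact K → K ⊆ U → ∃ C, ∀ p ∈ K, ∀ q ∈ K, dist (f p) (f q) ≤ C * dist p q) :
    ContinuousOn f U := by
  intro x hx
  obtain ⟨K, hK, hxK, hKU⟩ := exists_compact_subset hU hx
  obtain ⟨C, hC⟩ := hf K hK hKU
  exact ((LipschitzOnWith.of_dist_le' hC).continuousOn.continuousAt
    (mem_interior_iff_mem_nhds.1 hxK)).continuousWithinAt

namespace LoadingDensity

variable (L : LoadingDensity)

theorem continuousOn_partials :
    ContinuousOn (uncurry L.Ψ₁) (Ioi 0 ×ˢ Ioi 0) ∧ ContinuousOn (uncurry L.Ψ₂) (Ioi 0 ×ˢ Ioi 0) ∧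
      ContinuousOn (uncurry L.Ψ₁₂) (Ioi 0 ×ˢ Ioi 0) := by
  have of_gradLocLip (f : ℝ → ℝ → ℝ) (hf : ∀ K, IsCompact K → K ⊆ Ioi 0 ×ˢ Ioi 0 →
      ∃ C, ∀ p ∈ K, ∀ q ∈ K, |f p.1 p.2 - f q.1 q.2| ≤ C * ‖p - q‖) :
      ContinuousOn (uncurry f) (Ioi 0 ×ˢ Ioi 0) :=
    continuousOn_of_lipschitzOn_isCompact (isOpen_Ioi.prod isOpen_Ioi) fun K hK hKU =>
      (hf K hK hKU).imp fun C hC p hp q hq => by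
        rw [Real.dist_eq, dist_eq_norm]; exact hC p hp q hq
  exact ⟨of_gradLocLip _ fun K hK hKU => (L.gradLocLip K hK hKU).imp fun C hC p hp q hq =>
      (hC p hp q hq).1,
    of_gradLocLip _ fun K hK hKU => (L.gradLocLip K hK hKU).imp fun C hC p hp q hq =>
      (hC p hp q hq).2.1,
    of_gradLocLip _ fun K hK hKU => (L.gradLocLip K hK hKU).imp fun C hC p hp q hq =>
      (hC p hp q hq).2.2⟩

theorem hasDerivAt_Ψ₂_fst {x y : ℝ} (hx : 0 < x) (hy : 0 < y) :
    HasDerivAt (L.Ψ₂ · y) (L.Ψ₁₂ x y) x := by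
  have hQ : Ioi 0 ×ˢ Ioi 0 ∈ 𝓝 (x, y) := (isOpen_Ioi.prod isOpen_Ioi).mem_nhds ⟨hx, hy⟩
  exact hasDerivAt_of_continuousAt_mixed (f := L.Ψ) (f₁ := L.Ψ₁)
    (Filter.mem_of_superset hQ fun p hp => L.hasDeriv₁ _ _ hp.1 hp.2)
    (Filter.mem_of_superset (Ioi_mem_nhds hx) fun x' hx' => L.hasDeriv₂ _ _ hx' hy)
    (Filter.mem_of_superset hQ fun p hp => L.hasDeriv₁₂ _ _ hp.1 hp.2)
    (L.continuousOn_partials.2.2.continuousAt hQ)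

end LoadingDensity

/-- for fixed `z₁,z₂ > 0` the map `y ↦ Φ(y,z)` is continuously differentiable
on `(0,∞)²`, with partial derivatives given by the piecewise formulas `PhiY1`, `PhiY2`. -/
theorem statement4 (L : LoadingDensity) (z₁ z₂ : ℝ) (hz₁ : 0 < z₁) (hz₂ : 0 < z₂) :
    (∀ y₁ y₂ : ℝ, 0 < y₁ → 0 < y₂ →
      HasDerivAt (fun t => Phi L t y₂ z₁ z₂) (PhiY1 L y₁ y₂ z₁ z₂) y₁ ∧
      HasDerivAt (fun t => Phi L y₁ t z₁ z₂) (PhiY2 L y₁ y₂ z₁ z₂) y₂) ∧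
    ContinuousOn (fun p : ℝ × ℝ => (PhiY1 L p.1 p.2 z₁ z₂, PhiY2 L p.1 p.2 z₁ z₂))
      (Ioi (0:ℝ) ×ˢ Ioi (0:ℝ)) := by
  obtain ⟨hΨ₁, hΨ₂, hΨ₁₂⟩ := L.continuousOn_partials
  have swap_continuousOn {f : ℝ → ℝ → ℝ} (hf : ContinuousOn (uncurry f) (Ioi 0 ×ˢ Ioi 0)) :
      ContinuousOn (uncurry (swap f)) (Ioi 0 ×ˢ Ioi 0) :=
    hf.comp continuous_swap.continuousOn fun _ hp => ⟨hp.2, hp.1⟩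
  refine ⟨fun y₁ y₂ hy₁ hy₂ => ⟨?_, ?_⟩, ?_⟩
  · exact hasDerivAt_unloading_fst L.hasDeriv₁ (fun _ _ => L.hasDerivAt_Ψ₂_fst) hz₁ hz₂ hy₁ hy₂
  · exact hasDerivAt_unloading_snd L.hasDeriv₂ L.hasDeriv₁₂ hz₁ hz₂ hy₁ hy₂
  · have hY₁ := continuous_unloadingDeriv hΨ₁ hΨ₁₂ hz₁ hz₂
    have hY₂ := (continuous_unloadingDeriv (swap_continuousOn hΨ₂) (swap_continuousOn hΨ₁₂)
      hz₂ hz₁).comp continuous_swap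
    exact (hY₁.prodMk hY₂).continuousOn
end

section
/- Let Ψ : [0,∞)² → [0,∞) satisfy (Ψ1)–(Ψ4) and let Φ be the loading–unloading density built from Ψ. Then for every fixed z₁,z₂ > 0 and for l,j ∈ {1,2} with l ≠ j, the map y_j ↦ ∂_{y_l}Φ(y,z) is nonincreasing on (0,∞); equivalently, the mixed second derivative ∂²Φ/∂y₁∂y₂, which equals ∂₁₂Ψ(y₁,y₂) on R₁(z), ∂₁₂Ψ(z₁,y₂)·(y₁/z₁) on R₂(z), ∂₁₂Ψ(y₁,z₂)·(y₂/z₂) on R₃(z), and ∂₁₂Ψ(z₁,z₂)·(y₁/z₁)·(y₂/z₂) on R₄(z), is nonpositive wherever it exists. -/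
open MeasureTheory Set

/-- The mixed second derivative `∂²Φ/∂y₁∂y₂` of the loading–unloading density. -/
noncomputable def PhiY12 (L : LoadingDensity) (y₁ y₂ z₁ z₂ : ℝ) : ℝ :=
  if z₁ ≤ y₁ then
    if z₂ ≤ y₂ then L.Ψ₁₂ y₁ y₂
    else L.Ψ₁₂ y₁ z₂ * (y₂ / z₂)
  else
    if z₂ ≤ y₂ then L.Ψ₁₂ z₁ y₂ * (y₁ / z₁)
    else L.Ψ₁₂ z₁ z₂ * (y₁ / z₁) * (y₂ / z₂)

/-
Each component of `∇_y Φ` is, in the other variable, either the corresponding component of `∇Ψ`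
or its unloading continuation (the even quadratic through the value at the threshold `z` whose
slope at `z` is the matching entry of `∂₁₂Ψ`), multiplied by `min(y, z)/z ≥ 0`. So everything
reduces to `∂₁₂Ψ ≤ 0` on `(0,∞)²`, which holds everywhere because `∂₁₂Ψ` is continuous and
nonpositive almost everywhere by (Ψ3). It makes `∂₁Ψ` antitone in `y₂` and therefore `Ψ`
submodular, whence `∂₂Ψ` is antitone in `y₁`; and the unloading continuation of an antitone
function with a nonpositive slope at the threshold is again antitone.
-/

open Filter

theorem antitoneOn_of_hasDerivAt_nonpos {D : Set ℝ} (hD : Convex ℝ D) (hDo : IsOpen D)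
    {f f' : ℝ → ℝ} (hf : ∀ x ∈ D, HasDerivAt f (f' x) x) (hf' : ∀ x ∈ D, f' x ≤ 0) :
    AntitoneOn f D :=
  antitoneOn_of_hasDerivWithinAt_nonpos hD (fun x hx => (hf x hx).continuousAt.continuousWithinAt)
    (fun x hx => by rw [hDo.interior_eq] at hx ⊢; exact (hf x hx).hasDerivWithinAt)
    (fun x hx => hf' x (interior_subset hx))

theorem AntitoneOn.mul_const_of_nonneg {α β : Type*} [Preorder α] [Mul β] [Zero β] [Preorder β]
    [MulPosMono β] {f : α → β} {s : Set α} (hf : AntitoneOn f s) {c : β} (hc : 0 ≤ c) :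
    AntitoneOn (fun x => f x * c) s :=
  fun _ ha _ hb hab => mul_le_mul_of_nonneg_right (hf ha hb hab) hc

theorem locallyLipschitzOn_of_lipschitzOn_isCompact {E : Type*} [SeminormedAddCommGroup E]
    [LocallyCompactSpace E] {U : Set E} (hU : IsOpen U) {f : E → ℝ}
    (h : ∀ K, IsCompact K → K ⊆ U → ∃ C : ℝ, ∀ p ∈ K, ∀ q ∈ K, |f p - f q| ≤ C * ‖p - q‖) :
    LocallyLipschitzOn U f := by
  intro x hx
  obtain ⟨K, hK, hxK, hKU⟩ := exists_compact_subset hU hx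
  obtain ⟨C, hC⟩ := h K hK hKU
  refine ⟨Real.toNNReal C, K, mem_nhdsWithin_of_mem_nhds (mem_interior_iff_mem_nhds.1 hxK), ?_⟩
  exact LipschitzOnWith.of_dist_le' fun p hp q hq => by
    rw [Real.dist_eq, dist_eq_norm]
    exact hC p hp q hq

theorem ContinuousOn.nonpos_of_ae_nonpos {X : Type*} [TopologicalSpace X] [MeasurableSpace X]
    {μ : Measure X} [μ.IsOpenPosMeasure] {U : Set X} (hU : IsOpen U) {f : X → ℝ}
    (hf : ContinuousOn f U) (h : ∀ᵐ x ∂μ, x ∈ U → f x ≤ 0) : ∀ x ∈ U, f x ≤ 0 := by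
  have hopen : IsOpen (U ∩ f ⁻¹' Ioi 0) := hf.isOpen_inter_preimage hU isOpen_Ioi
  have hnull : μ (U ∩ f ⁻¹' Ioi 0) = 0 := by
    rw [← compl_mem_ae_iff]
    filter_upwards [h] with x hx ⟨hxU, hpos⟩
    exact (hx hxU).not_gt hpos
  intro x hx
  by_contra! hpos
  exact (hopen.measure_eq_zero_iff μ).1 hnull |>.subset ⟨hx, hpos⟩

/-- The unloading continuation of `f` below the threshold `z`: the even quadratic in `t` that
agrees with `f` at `z` and has slope `c` there. -/
noncomputable def unloadExt (f : ℝ → ℝ) (c z t : ℝ) : ℝ :=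
  if z ≤ t then f t else f z - z / 2 * c * (1 - (t / z) ^ 2)

theorem unloadExt_antitoneOn {f : ℝ → ℝ} {c z : ℝ} (hf : AntitoneOn f (Ici z)) (hc : c ≤ 0) :
    AntitoneOn (unloadExt f c z) (Ici 0) := by
  have hquad : ∀ s t, 0 ≤ s → s ≤ t → 0 < z →
      z / 2 * c * (1 - (s / z) ^ 2) ≤ z / 2 * c * (1 - (t / z) ^ 2) := by
    intro s t hs hst hz
    have : (s / z) ^ 2 ≤ (t / z) ^ 2 := by gcongr
    nlinarith [mul_nonpos_of_nonpos_of_nonneg hc hz.le]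
  intro x hx y hy hxy
  rw [mem_Ici] at hx hy
  unfold unloadExt
  split_ifs with hzy hzx hzx
  · exact hf hzx hzy hxy
  · have hz : 0 < z := hx.trans_lt (not_le.1 hzx)
    have := hquad x z hx (not_le.1 hzx).le hz
    rw [div_self hz.ne'] at this
    linarith [hf self_mem_Ici hzy hzy]
  · exact absurd (hzx.trans hxy) hzy
  · linarith [hquad x y hx hxy (hx.trans_lt (not_le.1 hzx))]

theorem hasDerivAt_unloadExt {f f' : ℝ → ℝ} {z : ℝ} (hz : z ≠ 0)
    (hf : ∀ t, z ≤ t → HasDerivAt f (f' t) t) (y : ℝ) :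
    HasDerivAt (unloadExt f (f' z) z) (if z ≤ y then f' y else f' z * (y / z)) y := by
  set q : ℝ → ℝ := fun t => f z - z / 2 * f' z * (1 - (t / z) ^ 2)
  have hq : ∀ x, HasDerivAt q (f' z * (x / z)) x := by
    intro x
    have h := (((hasDerivAt_id' x).div_const z).fun_pow 2).const_sub 1
      |>.const_mul (z / 2 * f' z) |>.const_sub (f z)
    refine h.congr_deriv ?_
    push_cast
    field_simp
  have hq_eq : ∀ t ≤ z, unloadExt f (f' z) z t = q t := by
    intro t ht
    rcases ht.lt_or_eq with ht | rfl
    · simp only [unloadExt, if_neg (not_le.2 ht), q]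
    · simp only [unloadExt, le_refl, if_true, div_self hz, q]
      ring
  rcases lt_trichotomy y z with hlt | rfl | hgt
  · rw [if_neg (not_le.2 hlt)]
    exact (hq y).congr_of_eventuallyEq <|
      eventually_of_mem (Iio_mem_nhds hlt) fun t ht => hq_eq t (le_of_lt ht)
  · rw [if_pos le_rfl]
    have hleft : HasDerivWithinAt (unloadExt f (f' y) y) (f' y) (Iic y) y := by
      have h := (hq y).hasDerivWithinAt (s := Iic y)
      rw [div_self hz, mul_one] at h
      exact h.congr (fun t ht => hq_eq t ht) (hq_eq y le_rfl)
    have hright : HasDerivWithinAt (unloadExt f (f' y) y) (f' y) (Ici y) y :=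
      (hf y le_rfl).hasDerivWithinAt.congr (fun t ht => if_pos ht) (if_pos le_rfl)
    simpa only [Iic_union_Ici, hasDerivWithinAt_univ] using hleft.union hright
  · rw [if_pos hgt.le]
    exact (hf y hgt.le).congr_of_eventuallyEq <|
      eventually_of_mem (Ioi_mem_nhds hgt) fun t ht => if_pos (le_of_lt ht)

namespace LoadingDensity

variable (L : LoadingDensity)

theorem continuousOn_Ψ₁₂ : ContinuousOn (fun p : ℝ × ℝ => L.Ψ₁₂ p.1 p.2) (Ioi 0 ×ˢ Ioi 0) :=
  (locallyLipschitzOn_of_lipschitzOn_isCompact (isOpen_Ioi.prod isOpen_Ioi) fun K hK hKU =>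
    (L.gradLocLip K hK hKU).imp fun _ hC p hp q hq => (hC p hp q hq).2.2).continuousOn

theorem Ψ₁₂_nonpos {y₁ y₂ : ℝ} (h₁ : 0 < y₁) (h₂ : 0 < y₂) : L.Ψ₁₂ y₁ y₂ ≤ 0 := by
  refine L.continuousOn_Ψ₁₂.nonpos_of_ae_nonpos (μ := volume) (isOpen_Ioi.prod isOpen_Ioi)
    ?_ (y₁, y₂) ⟨h₁, h₂⟩
  filter_upwards [L.psi3] with p hp hpU
  exact (hp (le_of_lt hpU.1) (le_of_lt hpU.2)).2.2.1.trans (min_le_right _ _)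

theorem antitoneOn_Ψ₁ {y₁ : ℝ} (hy₁ : 0 < y₁) : AntitoneOn (L.Ψ₁ y₁) (Ioi 0) :=
  antitoneOn_of_hasDerivAt_nonpos (convex_Ioi 0) isOpen_Ioi
    (fun t ht => L.hasDeriv₁₂ y₁ t hy₁ ht) fun _ ht => L.Ψ₁₂_nonpos hy₁ ht

theorem monotoneOn_sub_Ψ {s t : ℝ} (hs : 0 < s) (hst : s ≤ t) :
    MonotoneOn (fun u => L.Ψ s u - L.Ψ t u) (Ioi 0) := by
  intro u hu v hv huv
  have hanti : AntitoneOn (fun x => L.Ψ x v - L.Ψ x u) (Ioi 0) :=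
    antitoneOn_of_hasDerivAt_nonpos (convex_Ioi 0) isOpen_Ioi
      (fun x hx => (L.hasDeriv₁ x v hx hv).sub (L.hasDeriv₁ x u hx hu))
      fun x hx => sub_nonpos.2 (L.antitoneOn_Ψ₁ hx hu hv huv)
  have := hanti hs (hs.trans_le hst) hst
  dsimp only at this ⊢
  linarith

theorem antitoneOn_Ψ₂ {w : ℝ} (hw : 0 < w) : AntitoneOn (fun t => L.Ψ₂ t w) (Ioi 0) := by
  intro s hs t ht hst
  have h := (L.monotoneOn_sub_Ψ hs hst).derivWithin_nonneg (x := w)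
  rw [derivWithin_of_isOpen isOpen_Ioi hw,
    ((L.hasDeriv₂ s w hs hw).fun_sub (L.hasDeriv₂ t w ht hw)).deriv] at h
  dsimp only
  linarith

end LoadingDensity

section

variable (L : LoadingDensity) {y₁ y₂ z₁ z₂ : ℝ}

theorem PhiY1_eq (hz₁ : 0 < z₁) :
    PhiY1 L y₁ y₂ z₁ z₂ =
      unloadExt (L.Ψ₁ (max y₁ z₁)) (L.Ψ₁₂ (max y₁ z₁) z₂) z₂ y₂ * (min y₁ z₁ / z₁) := by
  by_cases h : z₁ ≤ y₁
  · rw [max_eq_left h, min_eq_right h, div_self hz₁.ne', mul_one]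
    simp only [PhiY1, unloadExt, if_pos h]
  · rw [max_eq_right (le_of_not_ge h), min_eq_left (le_of_not_ge h)]
    simp only [PhiY1, unloadExt, if_neg h]
    split_ifs <;> rfl

theorem PhiY2_eq (hz₂ : 0 < z₂) :
    PhiY2 L y₁ y₂ z₁ z₂ =
      unloadExt (fun t => L.Ψ₂ t (max y₂ z₂)) (L.Ψ₁₂ z₁ (max y₂ z₂)) z₁ y₁ *
        (min y₂ z₂ / z₂) := by
  by_cases h : z₂ ≤ y₂
  · rw [max_eq_left h, min_eq_right h, div_self hz₂.ne', mul_one]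
    simp only [PhiY2, unloadExt, if_pos h]
  · rw [max_eq_right (le_of_not_ge h), min_eq_left (le_of_not_ge h)]
    simp only [PhiY2, unloadExt, if_neg h]
    split_ifs <;> rfl

theorem PhiY12_eq (hz₁ : 0 < z₁) :
    PhiY12 L y₁ y₂ z₁ z₂ =
      (if z₂ ≤ y₂ then L.Ψ₁₂ (max y₁ z₁) y₂ else L.Ψ₁₂ (max y₁ z₁) z₂ * (y₂ / z₂)) *
        (min y₁ z₁ / z₁) := by
  by_cases h : z₁ ≤ y₁
  · rw [max_eq_left h, min_eq_right h, div_self hz₁.ne', mul_one]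
    simp only [PhiY12, if_pos h]
  · rw [max_eq_right (le_of_not_ge h), min_eq_left (le_of_not_ge h)]
    simp only [PhiY12, if_neg h]
    split_ifs <;> ring

end

/-- for fixed `z₁,z₂ > 0` the map `y_j ↦ ∂_{y_l}Φ(y,z)` (`j ≠ l`) is
nonincreasing on `(0,∞)`; equivalently, the mixed second derivative `∂²Φ/∂y₁∂y₂`,
given by the piecewise formula `PhiY12`, is nonpositive. -/
theorem statement6 (L : LoadingDensity) (z₁ z₂ : ℝ) (hz₁ : 0 < z₁) (hz₂ : 0 < z₂) :
    (∀ y₁ : ℝ, 0 < y₁ → AntitoneOn (fun t => PhiY1 L y₁ t z₁ z₂) (Ioi 0)) ∧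
    (∀ y₂ : ℝ, 0 < y₂ → AntitoneOn (fun t => PhiY2 L t y₂ z₁ z₂) (Ioi 0)) ∧
    (∀ y₁ y₂ : ℝ, 0 < y₁ → 0 < y₂ →
      HasDerivAt (fun t => PhiY1 L y₁ t z₁ z₂) (PhiY12 L y₁ y₂ z₁ z₂) y₂ ∧
      PhiY12 L y₁ y₂ z₁ z₂ ≤ 0) := by
  have hmax : ∀ y {z : ℝ}, 0 < z → 0 < max y z := fun _ _ hz => hz.trans_le (le_max_right _ _)
  have hscale : ∀ {y z : ℝ}, 0 < y → 0 < z → 0 ≤ min y z / z :=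
    fun hy hz => div_nonneg (le_min hy.le hz.le) hz.le
  refine ⟨fun y₁ hy₁ => ?_, fun y₂ hy₂ => ?_, fun y₁ y₂ hy₁ hy₂ => ⟨?_, ?_⟩⟩
  · have h := unloadExt_antitoneOn ((L.antitoneOn_Ψ₁ (hmax y₁ hz₁)).mono (Ici_subset_Ioi.2 hz₂))
      (L.Ψ₁₂_nonpos (hmax y₁ hz₁) hz₂)
    simp only [PhiY1_eq L hz₁]
    exact (h.mul_const_of_nonneg (hscale hy₁ hz₁)).mono Ioi_subset_Ici_self
  · have h := unloadExt_antitoneOn ((L.antitoneOn_Ψ₂ (hmax y₂ hz₂)).mono (Ici_subset_Ioi.2 hz₁))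
      (L.Ψ₁₂_nonpos hz₁ (hmax y₂ hz₂))
    simp only [PhiY2_eq L hz₂]
    exact (h.mul_const_of_nonneg (hscale hy₂ hz₂)).mono Ioi_subset_Ici_self
  · simp only [PhiY1_eq L hz₁, PhiY12_eq L hz₁]
    exact (hasDerivAt_unloadExt hz₂.ne'
      (fun t ht => L.hasDeriv₁₂ _ t (hmax y₁ hz₁) (hz₂.trans_le ht)) y₂).mul_const _
  · rw [PhiY12_eq L hz₁]
    refine mul_nonpos_of_nonpos_of_nonneg ?_ (hscale hy₁ hz₁)
    split_ifs with h
    · exact L.Ψ₁₂_nonpos (hmax y₁ hz₁) (hz₂.trans_le h)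
    · exact mul_nonpos_of_nonpos_of_nonneg (L.Ψ₁₂_nonpos (hmax y₁ hz₁) hz₂) (by positivity)
end

section
/- Let Ψ : [0,∞)² → [0,∞) satisfy (Ψ1)–(Ψ4) and in addition (Ψ5): ∇Ψ(y) → 0 and ∂₁₂Ψ(y) → 0 as |y| → ∞. Let Φ be the loading–unloading density built from Ψ. Then for every fixed z₁,z₂ > 0, the gradient in y of Φ vanishes at infinity: lim_{|y|→∞} |∇_yΦ(y,z)| = 0. -/
open MeasureTheory Set

/-- under the additional assumption (Ψ5) (the gradient of `Ψ` and `∂₁₂Ψ`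
vanish at infinity), for every fixed `z₁,z₂ > 0` the gradient in `y` of `Φ` vanishes
at infinity. -/
theorem statement7 (L : LoadingDensity)
    (psi5 : ∀ ε : ℝ, 0 < ε → ∃ R : ℝ, ∀ y₁ y₂ : ℝ, 0 ≤ y₁ → 0 ≤ y₂ →
      R ≤ ‖((y₁, y₂) : ℝ × ℝ)‖ →
      |L.Ψ₁ y₁ y₂| ≤ ε ∧ |L.Ψ₂ y₁ y₂| ≤ ε ∧ |L.Ψ₁₂ y₁ y₂| ≤ ε)
    (z₁ z₂ : ℝ) (hz₁ : 0 < z₁) (hz₂ : 0 < z₂) :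
    ∀ ε : ℝ, 0 < ε → ∃ R : ℝ, ∀ y₁ y₂ : ℝ, 0 ≤ y₁ → 0 ≤ y₂ →
      R ≤ ‖((y₁, y₂) : ℝ × ℝ)‖ →
      ‖((PhiY1 L y₁ y₂ z₁ z₂, PhiY2 L y₁ y₂ z₁ z₂) : ℝ × ℝ)‖ ≤ ε := by
  intro ε hε
  obtain ⟨c, hc⟩ : ∃ c : ℝ, c = 1 + (z₁ + z₂) / 2 := ⟨_, rfl⟩
  have hcpos : 0 < c := by rw [hc]; positivity
  obtain ⟨R₀, hR₀⟩ := psi5 (ε / c) (by positivity)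
  have hεc : 0 ≤ ε / c := by positivity
  refine ⟨max R₀ (z₁ + z₂ + 1), ?_⟩
  intro y₁ y₂ hy₁ hy₂ hR
  have hnorm : ‖((y₁, y₂) : ℝ × ℝ)‖ = max y₁ y₂ := by
    simp [Prod.norm_def, Real.norm_eq_abs, abs_of_nonneg hy₁, abs_of_nonneg hy₂]
  rw [hnorm] at hR
  have hRR₀ : R₀ ≤ max y₁ y₂ := le_trans (le_max_left _ _) hR
  have hRz : z₁ + z₂ + 1 ≤ max y₁ y₂ := le_trans (le_max_right _ _) hR
  -- key arithmetic bound
  have key : ∀ a m t zc : ℝ, |a| ≤ ε / c → |m| ≤ ε / c → 0 ≤ t → t ≤ 1 →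
      0 ≤ zc → zc ≤ z₁ + z₂ → |a - zc / 2 * m * t| ≤ ε := by
    intro a m t zc ha hm ht0 ht1 hzc0 hzc
    have h1 : |zc / 2 * m * t| ≤ zc / 2 * (ε / c) := by
      rw [abs_mul, abs_mul, abs_of_nonneg (by linarith : (0:ℝ) ≤ zc / 2),
        abs_of_nonneg ht0]
      calc zc / 2 * |m| * t ≤ zc / 2 * (ε / c) * 1 :=
            mul_le_mul (mul_le_mul_of_nonneg_left hm (by linarith)) ht1 ht0 (by positivity)
        _ = zc / 2 * (ε / c) := by ring
    have h2 : |a - zc / 2 * m * t| ≤ |a| + |zc / 2 * m * t| := by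
      rw [sub_eq_add_neg]
      exact (abs_add_le _ _).trans (by rw [abs_neg])
    have h3 : (ε / c) * c = ε := div_mul_cancel₀ ε (ne_of_gt hcpos)
    have h4 : ε / c + zc / 2 * (ε / c) ≤ ε :=
      calc ε / c + zc / 2 * (ε / c) = (ε / c) * (1 + zc / 2) := by ring
        _ ≤ (ε / c) * c := mul_le_mul_of_nonneg_left (by linarith [hc.ge]) hεc
        _ = ε := h3
    linarith
  have hc1 : (1:ℝ) ≤ c := by linarith [hc.ge]
  have hεε : ε / c ≤ ε := by
    rw [div_le_iff₀ hcpos]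
    nlinarith [mul_le_mul_of_nonneg_left hc1 hε.le]
  -- single-term bound
  have key1 : ∀ a t : ℝ, |a| ≤ ε / c → 0 ≤ t → t ≤ 1 → |a * t| ≤ ε := by
    intro a t ha ht0 ht1
    have h3 : (ε / c) * c = ε := div_mul_cancel₀ ε (ne_of_gt hcpos)
    rw [abs_mul, abs_of_nonneg ht0]
    calc |a| * t ≤ (ε / c) * 1 := mul_le_mul ha ht1 ht0 hεc
      _ ≤ ε := by rw [mul_one]; exact hεε
  -- bounds on the two components
  have h1 : |PhiY1 L y₁ y₂ z₁ z₂| ≤ ε := by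
    unfold PhiY1
    split_ifs with h₁ h₂ h₂
    · -- R₁
      have hn : R₀ ≤ ‖((y₁, y₂) : ℝ × ℝ)‖ := by rw [hnorm]; exact hRR₀
      exact le_trans (hR₀ y₁ y₂ hy₁ hy₂ hn).1 hεε
    · -- z₁ ≤ y₁, y₂ < z₂
      push_neg at h₂
      have hy₁R : R₀ ≤ y₁ := by
        rcases max_cases y₁ y₂ with ⟨he, _⟩ | ⟨he, hle⟩
        · rw [he] at hRR₀; exact hRR₀
        · rw [he] at hRz; linarith
      have hn : R₀ ≤ ‖((y₁, z₂) : ℝ × ℝ)‖ := by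
        have : ‖((y₁, z₂) : ℝ × ℝ)‖ = max y₁ z₂ := by
          simp [Prod.norm_def, Real.norm_eq_abs, abs_of_nonneg hy₁, abs_of_nonneg hz₂.le]
        rw [this]; exact le_trans hy₁R (le_max_left _ _)
      obtain ⟨ha, _, hm⟩ := hR₀ y₁ z₂ hy₁ hz₂.le hn
      have hq : (0:ℝ) ≤ (y₂ / z₂) ^ 2 := sq_nonneg _
      have hq1 : (y₂ / z₂) ^ 2 ≤ 1 := by
        rw [sq_le_one_iff_abs_le_one, abs_of_nonneg (by positivity)]
        rw [div_le_one hz₂]; linarith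
      exact key _ _ _ _ ha hm (by linarith) (by linarith) hz₂.le (by linarith)
    · -- y₁ < z₁, z₂ ≤ y₂
      push_neg at h₁
      have hy₂R : R₀ ≤ y₂ := by
        rcases max_cases y₁ y₂ with ⟨he, _⟩ | ⟨he, _⟩
        · rw [he] at hRz; linarith
        · rw [he] at hRR₀; exact hRR₀
      have hn : R₀ ≤ ‖((z₁, y₂) : ℝ × ℝ)‖ := by
        have : ‖((z₁, y₂) : ℝ × ℝ)‖ = max z₁ y₂ := by
          simp [Prod.norm_def, Real.norm_eq_abs, abs_of_nonneg hz₁.le, abs_of_nonneg hy₂]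
        rw [this]; exact le_trans hy₂R (le_max_right _ _)
      obtain ⟨ha, _, _⟩ := hR₀ z₁ y₂ hz₁.le hy₂ hn
      exact key1 _ _ ha (by positivity) (by rw [div_le_one hz₁]; linarith)
    · -- both small: contradiction
      push_neg at h₁ h₂
      exfalso
      rcases max_cases y₁ y₂ with ⟨he, _⟩ | ⟨he, _⟩ <;> rw [he] at hRz <;> linarith
  have h2 : |PhiY2 L y₁ y₂ z₁ z₂| ≤ ε := by
    unfold PhiY2
    split_ifs with h₂ h₁ h₁
    · have hn : R₀ ≤ ‖((y₁, y₂) : ℝ × ℝ)‖ := by rw [hnorm]; exact hRR₀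
      exact le_trans (hR₀ y₁ y₂ hy₁ hy₂ hn).2.1 hεε
    · -- z₂ ≤ y₂, y₁ < z₁
      push_neg at h₁
      have hy₂R : R₀ ≤ y₂ := by
        rcases max_cases y₁ y₂ with ⟨he, _⟩ | ⟨he, _⟩
        · rw [he] at hRz; linarith
        · rw [he] at hRR₀; exact hRR₀
      have hn : R₀ ≤ ‖((z₁, y₂) : ℝ × ℝ)‖ := by
        have : ‖((z₁, y₂) : ℝ × ℝ)‖ = max z₁ y₂ := by
          simp [Prod.norm_def, Real.norm_eq_abs, abs_of_nonneg hz₁.le, abs_of_nonneg hy₂]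
        rw [this]; exact le_trans hy₂R (le_max_right _ _)
      obtain ⟨_, ha, hm⟩ := hR₀ z₁ y₂ hz₁.le hy₂ hn
      have hq1 : (y₁ / z₁) ^ 2 ≤ 1 := by
        rw [sq_le_one_iff_abs_le_one, abs_of_nonneg (by positivity)]
        rw [div_le_one hz₁]; linarith
      exact key _ _ _ _ ha hm (by nlinarith [sq_nonneg (y₁ / z₁)]) (by nlinarith [sq_nonneg (y₁ / z₁)]) hz₁.le (by linarith)
    · -- y₂ < z₂, z₁ ≤ y₁
      push_neg at h₂
      have hy₁R : R₀ ≤ y₁ := by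
        rcases max_cases y₁ y₂ with ⟨he, _⟩ | ⟨he, _⟩
        · rw [he] at hRR₀; exact hRR₀
        · rw [he] at hRz; linarith
      have hn : R₀ ≤ ‖((y₁, z₂) : ℝ × ℝ)‖ := by
        have : ‖((y₁, z₂) : ℝ × ℝ)‖ = max y₁ z₂ := by
          simp [Prod.norm_def, Real.norm_eq_abs, abs_of_nonneg hy₁, abs_of_nonneg hz₂.le]
        rw [this]; exact le_trans hy₁R (le_max_left _ _)
      obtain ⟨_, ha, _⟩ := hR₀ y₁ z₂ hy₁ hz₂.le hn
      exact key1 _ _ ha (by positivity) (by rw [div_le_one hz₂]; linarith)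
    · push_neg at h₁ h₂
      exfalso
      rcases max_cases y₁ y₂ with ⟨he, _⟩ | ⟨he, _⟩ <;> rw [he] at hRz <;> linarith
  have : ‖((PhiY1 L y₁ y₂ z₁ z₂, PhiY2 L y₁ y₂ z₁ z₂) : ℝ × ℝ)‖ =
      max |PhiY1 L y₁ y₂ z₁ z₂| |PhiY2 L y₁ y₂ z₁ z₂| := by
    simp [Prod.norm_def, Real.norm_eq_abs]
  rw [this]
  exact max_le h1 h2
end

section
/- Let Ψ : [0,∞)² → [0,∞) satisfy (Ψ1)–(Ψ4) and be of class C² on (0,∞)², let Φ be the loading–unloading density built from Ψ, and let T be the loading–unloading tension built from S := ∇Ψ. Then T(y,z) = ∇_yΦ(y,z) for all y,z with strictly positive components if and only if ∂₁₂Ψ ≡ 0 on (0,∞)² (equivalently, Ψ(y₁,y₂) = ψ₁(y₁) + ψ₂(y₂) for suitable functions ψ₁,ψ₂ of one variable). -/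
open MeasureTheory Set

/-- First component of the loading–unloading tension `T` built from a loading tension `S₁`. -/
noncomputable def T1 (S₁ : ℝ → ℝ → ℝ) (y₁ y₂ z₁ z₂ : ℝ) : ℝ :=
  if z₁ ≤ y₁ then
    if z₂ ≤ y₂ then S₁ y₁ y₂
    else S₁ y₁ z₂
  else
    if z₂ ≤ y₂ then S₁ z₁ y₂ * (y₁ / z₁)
    else S₁ z₁ z₂ * (y₁ / z₁)

/-- Second component of the loading–unloading tension `T` built from a loading tension `S₂`. -/
noncomputable def T2 (S₂ : ℝ → ℝ → ℝ) (y₁ y₂ z₁ z₂ : ℝ) : ℝ :=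
  if z₂ ≤ y₂ then
    if z₁ ≤ y₁ then S₂ y₁ y₂
    else S₂ z₁ y₂
  else
    if z₁ ≤ y₁ then S₂ y₁ z₂ * (y₂ / z₂)
    else S₂ z₁ z₂ * (y₂ / z₂)

/-- if `Ψ` is moreover of class `C²` on `(0,∞)²`, the loading–unloading
tension built from `S := ∇Ψ` coincides with the gradient in `y` of the loading–unloading
density `Φ` (at all points with strictly positive components) if and only if
`∂₁₂Ψ ≡ 0` on `(0,∞)²`. -/
theorem statement10 (L : LoadingDensity)
    (hC2₁₁ : ∀ y₁ y₂ : ℝ, 0 < y₁ → 0 < y₂ →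
      HasDerivAt (fun t => L.Ψ₁ t y₂) (L.Ψ₁₁ y₁ y₂) y₁)
    (hC2₂₂ : ∀ y₁ y₂ : ℝ, 0 < y₁ → 0 < y₂ →
      HasDerivAt (fun t => L.Ψ₂ y₁ t) (L.Ψ₂₂ y₁ y₂) y₂)
    (hC2₂₁ : ∀ y₁ y₂ : ℝ, 0 < y₁ → 0 < y₂ →
      HasDerivAt (fun t => L.Ψ₂ t y₂) (L.Ψ₁₂ y₁ y₂) y₁)
    (hC2cont : ContinuousOn
      (fun p : ℝ × ℝ => ((L.Ψ₁₁ p.1 p.2, L.Ψ₁₂ p.1 p.2, L.Ψ₂₂ p.1 p.2) : ℝ × ℝ × ℝ))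
      (Ioi (0:ℝ) ×ˢ Ioi (0:ℝ))) :
    (∀ y₁ y₂ z₁ z₂ : ℝ, 0 < y₁ → 0 < y₂ → 0 < z₁ → 0 < z₂ →
        T1 L.Ψ₁ y₁ y₂ z₁ z₂ = PhiY1 L y₁ y₂ z₁ z₂ ∧
        T2 L.Ψ₂ y₁ y₂ z₁ z₂ = PhiY2 L y₁ y₂ z₁ z₂) ↔
      (∀ y₁ y₂ : ℝ, 0 < y₁ → 0 < y₂ → L.Ψ₁₂ y₁ y₂ = 0) := by
  constructor
  · intro h y₁ y₂ hy₁ hy₂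
    have H := (h y₁ (y₂ / 2) y₁ y₂ hy₁ (by linarith) hy₁ hy₂).1
    simp only [T1, PhiY1, if_pos (le_refl y₁),
      if_neg (by linarith : ¬ y₂ ≤ y₂ / 2)] at H
    have hne : (1 - (y₂ / 2 / y₂) ^ 2) = 3 / 4 := by
      field_simp
      ring
    rw [hne] at H
    nlinarith [H]
  · intro h y₁ y₂ z₁ z₂ hy₁ hy₂ hz₁ hz₂
    constructor
    · unfold T1 PhiY1
      split_ifs with h1 h2 h2
      · rfl
      · rw [h y₁ z₂ hy₁ hz₂]; ring
      · rfl
      · rw [h z₁ z₂ hz₁ hz₂]; ring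
    · unfold T2 PhiY2
      split_ifs with h1 h2 h2
      · rfl
      · rw [h z₁ y₂ hz₁ hy₂]; ring
      · rfl
      · rw [h z₁ z₂ hz₁ hz₂]; ring
end

section
/- Let ψ₁, ψ₂ be one-dimensional cohesive densities with sup ψᵢ = 1, and let F ∈ C^{2,1}([0,1]²) be nonnegative with F(0,0)=0, ∂ᵢF ≥ 0, ∂ᵢᵢF ≤ 0, ∂₁₂F ≤ 0 and ∂ᵢᵢⱼF ≥ 0 on [0,1]² for i,j ∈ {1,2}, i ≠ j. Define Ψ(y₁,y₂) := F(ψ₁(y₁),ψ₂(y₂)). Then Ψ satisfies (Ψ1)–(Ψ4): Ψ(0,0)=0; Ψ is bounded and Lipschitz with ∇Ψ and ∂₁₂Ψ locally Lipschitz on (0,∞)²; for i ≠ j, a.e. on [0,∞)² one has ∂ᵢΨ ≥ 0, ∂₁₂Ψ ≤ 0, ∂ᵢΨ − yᵢ∂ᵢᵢΨ ≥ 0 and ∂₁₂Ψ − yᵢ∂ᵢᵢⱼΨ ≤ 0; and sup_{y₁,y₂>0}(y₁+y₂)|∂₁₂Ψ(y₁,y₂)| < ∞. -/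
open MeasureTheory Set

/-- A one-dimensional cohesive density `f : [0,∞) → [0,∞)`, together with its derivative
`f'` and its (a.e. defined) second derivative `f''`: `f` is of class `C¹` with locally
Lipschitz derivative, bounded, Lipschitz, nondecreasing, `f(0) = 0`,
`f'(y) − y f''(y) ≥ 0` a.e. and `sup_{y>0} y f'(y) < ∞`. -/
structure CohesiveDensity where
  f : ℝ → ℝ
  f' : ℝ → ℝ
  f'' : ℝ → ℝ
  nonneg : ∀ y : ℝ, 0 ≤ y → 0 ≤ f y
  zero : f 0 = 0
  deriv_at : ∀ y : ℝ, 0 < y → HasDerivAt f (f' y) y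
  deriv_at0 : HasDerivWithinAt f (f' 0) (Ici 0) 0
  deriv_cont : ContinuousOn f' (Ici 0)
  deriv_locLip : ∀ b : ℝ, 0 < b → ∃ L : ℝ, ∀ x ∈ Icc (0:ℝ) b, ∀ y ∈ Icc (0:ℝ) b,
    |f' x - f' y| ≤ L * |x - y|
  bounded : ∃ M : ℝ, ∀ y : ℝ, 0 ≤ y → f y ≤ M
  lip : ∃ L : ℝ, ∀ x : ℝ, 0 ≤ x → ∀ y : ℝ, 0 ≤ y → |f x - f y| ≤ L * |x - y|
  mono : MonotoneOn f (Ici 0)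
  snd_deriv_ae : ∀ᵐ y ∂(volume : Measure ℝ), 0 < y → HasDerivAt f' (f'' y) y
  psi_a : ∀ᵐ y ∂(volume : Measure ℝ), 0 < y → 0 ≤ f' y - y * f'' y
  psi_b : ∃ M : ℝ, ∀ y : ℝ, 0 < y → y * f' y ≤ M

/-- An auxiliary function `F ∈ C^{2,1}([0,1]²)`, nonnegative, with `F(0,0) = 0`,
`∂ᵢF ≥ 0`, `∂ᵢᵢF ≤ 0`, `∂₁₂F ≤ 0` and `∂ᵢᵢⱼF ≥ 0` on `[0,1]²` (`i ≠ j`), encoded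
together with its partial derivatives. -/
structure AuxF where
  F : ℝ → ℝ → ℝ
  F₁ : ℝ → ℝ → ℝ
  F₂ : ℝ → ℝ → ℝ
  F₁₁ : ℝ → ℝ → ℝ
  F₂₂ : ℝ → ℝ → ℝ
  F₁₂ : ℝ → ℝ → ℝ
  F₁₁₂ : ℝ → ℝ → ℝ
  F₁₂₂ : ℝ → ℝ → ℝ
  nonneg : ∀ ξ₁ ∈ Icc (0:ℝ) 1, ∀ ξ₂ ∈ Icc (0:ℝ) 1, 0 ≤ F ξ₁ ξ₂
  zero : F 0 0 = 0
  hd1 : ∀ ξ₁ ∈ Icc (0:ℝ) 1, ∀ ξ₂ ∈ Icc (0:ℝ) 1,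
    HasDerivWithinAt (fun t => F t ξ₂) (F₁ ξ₁ ξ₂) (Icc 0 1) ξ₁
  hd2 : ∀ ξ₁ ∈ Icc (0:ℝ) 1, ∀ ξ₂ ∈ Icc (0:ℝ) 1,
    HasDerivWithinAt (fun t => F ξ₁ t) (F₂ ξ₁ ξ₂) (Icc 0 1) ξ₂
  hd11 : ∀ ξ₁ ∈ Icc (0:ℝ) 1, ∀ ξ₂ ∈ Icc (0:ℝ) 1,
    HasDerivWithinAt (fun t => F₁ t ξ₂) (F₁₁ ξ₁ ξ₂) (Icc 0 1) ξ₁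
  hd22 : ∀ ξ₁ ∈ Icc (0:ℝ) 1, ∀ ξ₂ ∈ Icc (0:ℝ) 1,
    HasDerivWithinAt (fun t => F₂ ξ₁ t) (F₂₂ ξ₁ ξ₂) (Icc 0 1) ξ₂
  hd12 : ∀ ξ₁ ∈ Icc (0:ℝ) 1, ∀ ξ₂ ∈ Icc (0:ℝ) 1,
    HasDerivWithinAt (fun t => F₁ ξ₁ t) (F₁₂ ξ₁ ξ₂) (Icc 0 1) ξ₂
  hd112 : ∀ ξ₁ ∈ Icc (0:ℝ) 1, ∀ ξ₂ ∈ Icc (0:ℝ) 1,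
    HasDerivWithinAt (fun t => F₁₁ ξ₁ t) (F₁₁₂ ξ₁ ξ₂) (Icc 0 1) ξ₂
  hd122 : ∀ ξ₁ ∈ Icc (0:ℝ) 1, ∀ ξ₂ ∈ Icc (0:ℝ) 1,
    HasDerivWithinAt (fun t => F₁₂ ξ₁ t) (F₁₂₂ ξ₁ ξ₂) (Icc 0 1) ξ₂
  lipSecond : ∃ L : ℝ, ∀ p ∈ Icc (0:ℝ) 1 ×ˢ Icc (0:ℝ) 1, ∀ q ∈ Icc (0:ℝ) 1 ×ˢ Icc (0:ℝ) 1,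
    |F₁₁ p.1 p.2 - F₁₁ q.1 q.2| ≤ L * ‖p - q‖ ∧
    |F₂₂ p.1 p.2 - F₂₂ q.1 q.2| ≤ L * ‖p - q‖ ∧
    |F₁₂ p.1 p.2 - F₁₂ q.1 q.2| ≤ L * ‖p - q‖
  signs : ∀ ξ₁ ∈ Icc (0:ℝ) 1, ∀ ξ₂ ∈ Icc (0:ℝ) 1,
    0 ≤ F₁ ξ₁ ξ₂ ∧ 0 ≤ F₂ ξ₁ ξ₂ ∧ F₁₁ ξ₁ ξ₂ ≤ 0 ∧ F₂₂ ξ₁ ξ₂ ≤ 0 ∧ F₁₂ ξ₁ ξ₂ ≤ 0 ∧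
    0 ≤ F₁₁₂ ξ₁ ξ₂ ∧ 0 ≤ F₁₂₂ ξ₁ ξ₂
namespace S11

lemma mem01 (D : CohesiveDensity) (hsup : IsLUB (D.f '' Ici 0) 1) :
    ∀ y : ℝ, 0 ≤ y → D.f y ∈ Icc (0:ℝ) 1 :=
  fun y hy => ⟨D.nonneg y hy, hsup.1 ⟨y, hy, rfl⟩⟩

lemma hasDerivWithinAt_Ici (D : CohesiveDensity) (y : ℝ) (hy : 0 ≤ y) :
    HasDerivWithinAt D.f (D.f' y) (Ici 0) y := by
  rcases eq_or_lt_of_le hy with h | h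
  · rw [← h]; exact D.deriv_at0
  · exact (D.deriv_at y h).hasDerivWithinAt

lemma tendsto_slope (D : CohesiveDensity) (y : ℝ) (hy : 0 ≤ y) :
    Filter.Tendsto (slope D.f y) (nhdsWithin y (Ioi y)) (nhds (D.f' y)) := by
  have h := hasDerivWithinAt_iff_tendsto_slope.mp (hasDerivWithinAt_Ici D y hy)
  exact h.mono_left (nhdsWithin_mono _ (fun z hz => ⟨le_of_lt (lt_of_le_of_lt hy hz), ne_of_gt hz⟩))

lemma deriv_nonneg (D : CohesiveDensity) (y : ℝ) (hy : 0 ≤ y) : 0 ≤ D.f' y := by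
  refine ge_of_tendsto (tendsto_slope D y hy) ?_
  filter_upwards [self_mem_nhdsWithin] with z hz
  rw [slope_def_field]
  have hz' : y < z := hz
  apply div_nonneg _ (by linarith)
  have := D.mono hy (le_of_lt (lt_of_le_of_lt hy hz')) (le_of_lt hz')
  linarith

lemma deriv_le_lip (D : CohesiveDensity) {L : ℝ}
    (hL : ∀ x : ℝ, 0 ≤ x → ∀ y : ℝ, 0 ≤ y → |D.f x - D.f y| ≤ L * |x - y|)
    (y : ℝ) (hy : 0 ≤ y) : D.f' y ≤ L := by
  refine le_of_tendsto (tendsto_slope D y hy) ?_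
  filter_upwards [self_mem_nhdsWithin] with z hz
  have hz' : y < z := hz
  rw [slope_def_field]
  rw [div_le_iff₀ (by linarith)]
  calc D.f z - D.f y ≤ |D.f z - D.f y| := le_abs_self _
    _ ≤ L * |z - y| := hL z (le_of_lt (lt_of_le_of_lt hy hz')) y hy
    _ = L * (z - y) := by rw [abs_of_pos (by linarith)]


lemma norm_pair_le (a b : ℝ × ℝ) : ‖a - b‖ ≤ |a.1 - b.1| + |a.2 - b.2| := by
  rw [Prod.norm_def]
  simp only [Real.norm_eq_abs]
  exact max_le (le_add_of_nonneg_right (abs_nonneg _)) (le_add_of_nonneg_left (abs_nonneg _))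

lemma auxF_bounds (A : AuxF) : ∃ C : ℝ, 0 ≤ C ∧
    (∀ ξ₁ ∈ Icc (0:ℝ) 1, ∀ ξ₂ ∈ Icc (0:ℝ) 1,
      |A.F₁ ξ₁ ξ₂| ≤ C ∧ |A.F₂ ξ₁ ξ₂| ≤ C ∧ |A.F₁₂ ξ₁ ξ₂| ≤ C) ∧
    (∀ a ∈ Icc (0:ℝ) 1, ∀ b ∈ Icc (0:ℝ) 1, ∀ c ∈ Icc (0:ℝ) 1, ∀ d ∈ Icc (0:ℝ) 1,
      |A.F a b - A.F c d| ≤ C * (|a - c| + |b - d|) ∧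
      |A.F₁ a b - A.F₁ c d| ≤ C * (|a - c| + |b - d|) ∧
      |A.F₂ a b - A.F₂ c d| ≤ C * (|a - c| + |b - d|) ∧
      |A.F₁₂ a b - A.F₁₂ c d| ≤ C * (|a - c| + |b - d|)) := by
  obtain ⟨L, hLip⟩ := A.lipSecond
  set L' : ℝ := max L 0 with hL'
  have hL'0 : 0 ≤ L' := le_max_right _ _
  have h00 : ((0:ℝ), (0:ℝ)) ∈ Icc (0:ℝ) 1 ×ˢ Icc (0:ℝ) 1 := by constructor <;> exact ⟨le_refl _, zero_le_one⟩
  -- uniform bound on second derivatives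
  set D2 : ℝ := |A.F₁₁ 0 0| + |A.F₂₂ 0 0| + |A.F₁₂ 0 0| + L' with hD2
  have hD2nn : 0 ≤ D2 := by positivity
  have hsecond : ∀ a ∈ Icc (0:ℝ) 1, ∀ b ∈ Icc (0:ℝ) 1,
      |A.F₁₁ a b| ≤ D2 ∧ |A.F₂₂ a b| ≤ D2 ∧ |A.F₁₂ a b| ≤ D2 := by
    intro a ha b hb
    have hmem : ((a, b) : ℝ × ℝ) ∈ Icc (0:ℝ) 1 ×ˢ Icc (0:ℝ) 1 := ⟨ha, hb⟩
    obtain ⟨h1, h2, h3⟩ := hLip (a, b) hmem ((0:ℝ), (0:ℝ)) h00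
    have hn : ‖((a,b) : ℝ × ℝ) - ((0:ℝ),(0:ℝ))‖ ≤ 1 := by
      have he : ((a,b):ℝ×ℝ) - ((0:ℝ),(0:ℝ)) = (a, b) := by simp
      rw [he, Prod.norm_def]
      exact max_le (by rw [Real.norm_eq_abs, abs_of_nonneg ha.1]; exact ha.2)
        (by rw [Real.norm_eq_abs, abs_of_nonneg hb.1]; exact hb.2)
    have hbd : ∀ u v : ℝ, |u - A.F₁₁ 0 0| ≤ L * ‖((a,b):ℝ×ℝ) - ((0:ℝ),(0:ℝ))‖ → True := fun _ _ _ => trivial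
    have key : ∀ z w : ℝ, |z - w| ≤ L * ‖((a,b):ℝ×ℝ) - ((0:ℝ),(0:ℝ))‖ → |z| ≤ |w| + L' := by
      intro z w h
      have h2' : L * ‖((a,b):ℝ×ℝ) - ((0:ℝ),(0:ℝ))‖ ≤ L' := by
        rcases le_or_gt L 0 with h' | h'
        · exact le_trans (mul_nonpos_of_nonpos_of_nonneg h' (norm_nonneg _)) hL'0
        · calc L * ‖_‖ ≤ L * 1 := by
                refine mul_le_mul_of_nonneg_left hn (le_of_lt h')
            _ ≤ L' := by rw [mul_one]; exact le_max_left _ _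
      calc |z| ≤ |w| + |z - w| := by
            have := abs_sub_abs_le_abs_sub z w; linarith [abs_nonneg (z - w)]
        _ ≤ |w| + L' := by linarith
    exact ⟨by have := key _ _ h1; rw [hD2]; linarith [abs_nonneg (A.F₂₂ 0 0), abs_nonneg (A.F₁₂ 0 0)],
      by have := key _ _ h2; rw [hD2]; linarith [abs_nonneg (A.F₁₁ 0 0), abs_nonneg (A.F₁₂ 0 0)],
      by have := key _ _ h3; rw [hD2]; linarith [abs_nonneg (A.F₁₁ 0 0), abs_nonneg (A.F₂₂ 0 0)]⟩
  -- one-variable Lipschitz estimates via MVT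
  have lipF₁ : ∀ a ∈ Icc (0:ℝ) 1, ∀ b ∈ Icc (0:ℝ) 1, ∀ c ∈ Icc (0:ℝ) 1, ∀ d ∈ Icc (0:ℝ) 1,
      |A.F₁ a b - A.F₁ c d| ≤ D2 * (|a - c| + |b - d|) := by
    intro a ha b hb c hc d hd
    have h1 : |A.F₁ a b - A.F₁ c b| ≤ D2 * |a - c| := by
      have := Convex.norm_image_sub_le_of_norm_hasDerivWithin_le
        (f := fun t => A.F₁ t b) (f' := fun t => A.F₁₁ t b) (s := Icc 0 1) (C := D2)
        (fun x hx => A.hd11 x hx b hb)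
        (fun x hx => by rw [Real.norm_eq_abs]; exact (hsecond x hx b hb).1)
        (convex_Icc 0 1) hc ha
      simpa [Real.norm_eq_abs] using this
    have h2 : |A.F₁ c b - A.F₁ c d| ≤ D2 * |b - d| := by
      have := Convex.norm_image_sub_le_of_norm_hasDerivWithin_le
        (f := fun t => A.F₁ c t) (f' := fun t => A.F₁₂ c t) (s := Icc 0 1) (C := D2)
        (fun x hx => A.hd12 c hc x hx)
        (fun x hx => by rw [Real.norm_eq_abs]; exact (hsecond c hc x hx).2.2)
        (convex_Icc 0 1) hd hb
      simpa [Real.norm_eq_abs] using this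
    calc |A.F₁ a b - A.F₁ c d| ≤ |A.F₁ a b - A.F₁ c b| + |A.F₁ c b - A.F₁ c d| := by
          have := abs_sub_le (A.F₁ a b) (A.F₁ c b) (A.F₁ c d); linarith
      _ ≤ D2 * |a - c| + D2 * |b - d| := add_le_add h1 h2
      _ = D2 * (|a - c| + |b - d|) := by ring
  -- difference of differences bound
  have slopeG : ∀ a ∈ Icc (0:ℝ) 1, ∀ c ∈ Icc (0:ℝ) 1, ∀ b ∈ Icc (0:ℝ) 1, ∀ z ∈ Icc (0:ℝ) 1,
      |(A.F a z - A.F a b) - (A.F c z - A.F c b)| ≤ D2 * |a - c| * |z - b| := by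
    intro a ha c hc b hb z hz
    have hG : ∀ s ∈ Icc (0:ℝ) 1, HasDerivWithinAt (fun s => A.F s z - A.F s b)
        (A.F₁ s z - A.F₁ s b) (Icc 0 1) s :=
      fun s hs => (A.hd1 s hs z hz).sub (A.hd1 s hs b hb)
    have hGb : ∀ s ∈ Icc (0:ℝ) 1, ‖A.F₁ s z - A.F₁ s b‖ ≤ D2 * |z - b| := by
      intro s hs; rw [Real.norm_eq_abs]
      have := lipF₁ s hs z hz s hs b hb
      simpa using this
    have := Convex.norm_image_sub_le_of_norm_hasDerivWithin_le hG hGb (convex_Icc 0 1) hc ha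
    rw [Real.norm_eq_abs, Real.norm_eq_abs] at this
    calc |(A.F a z - A.F a b) - (A.F c z - A.F c b)| ≤ D2 * |z - b| * |a - c| := this
      _ = D2 * |a - c| * |z - b| := by ring
  -- Lipschitz of F₂ in the first variable
  have lipF₂fst : ∀ a ∈ Icc (0:ℝ) 1, ∀ c ∈ Icc (0:ℝ) 1, ∀ b ∈ Icc (0:ℝ) 1,
      |A.F₂ a b - A.F₂ c b| ≤ D2 * |a - c| := by
    intro a ha c hc b hb
    have hne : (nhdsWithin b (Icc (0:ℝ) 1 \ {b})).NeBot := by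
      rcases lt_or_eq_of_le hb.2 with h1 | h1
      · haveI := left_nhdsWithin_Ioo_neBot h1
        exact Filter.neBot_of_le (f := nhdsWithin b (Ioo b 1))
          (nhdsWithin_mono _ (fun x hx => ⟨⟨le_trans hb.1 (le_of_lt hx.1), le_of_lt hx.2⟩, ne_of_gt hx.1⟩))
      · haveI := right_nhdsWithin_Ioo_neBot (a := (0:ℝ)) (b := b) (by rw [h1]; exact zero_lt_one)
        exact Filter.neBot_of_le (f := nhdsWithin b (Ioo 0 b))
          (nhdsWithin_mono _ (fun x hx => ⟨⟨le_of_lt hx.1, le_of_lt (lt_of_lt_of_le hx.2 hb.2)⟩, ne_of_lt hx.2⟩))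
    have ht := ((hasDerivWithinAt_iff_tendsto_slope.mp (A.hd2 a ha b hb)).sub
      (hasDerivWithinAt_iff_tendsto_slope.mp (A.hd2 c hc b hb))).abs
    refine le_of_tendsto ht ?_
    filter_upwards [self_mem_nhdsWithin] with z hz
    obtain ⟨hz1, hz2⟩ := hz
    simp only [slope_def_field]
    rw [div_sub_div_same, abs_div]
    rw [div_le_iff₀ (abs_pos.mpr (sub_ne_zero.mpr (fun h => hz2 (by simp [h]))))]
    calc |(A.F a z - A.F a b) - (A.F c z - A.F c b)| ≤ D2 * |a - c| * |z - b| :=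
          slopeG a ha c hc b hb z hz1
      _ = D2 * |a - c| * |z - b| := rfl
  -- Lipschitz of F₂
  have lipF₂ : ∀ a ∈ Icc (0:ℝ) 1, ∀ b ∈ Icc (0:ℝ) 1, ∀ c ∈ Icc (0:ℝ) 1, ∀ d ∈ Icc (0:ℝ) 1,
      |A.F₂ a b - A.F₂ c d| ≤ D2 * (|a - c| + |b - d|) := by
    intro a ha b hb c hc d hd
    have h2 : |A.F₂ c b - A.F₂ c d| ≤ D2 * |b - d| := by
      have := Convex.norm_image_sub_le_of_norm_hasDerivWithin_le
        (f := fun t => A.F₂ c t) (f' := fun t => A.F₂₂ c t) (s := Icc 0 1) (C := D2)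
        (fun x hx => A.hd22 c hc x hx)
        (fun x hx => by rw [Real.norm_eq_abs]; exact (hsecond c hc x hx).2.1)
        (convex_Icc 0 1) hd hb
      simpa [Real.norm_eq_abs] using this
    have h1 := lipF₂fst a ha c hc b hb
    calc |A.F₂ a b - A.F₂ c d| ≤ |A.F₂ a b - A.F₂ c b| + |A.F₂ c b - A.F₂ c d| := by
          have := abs_sub_le (A.F₂ a b) (A.F₂ c b) (A.F₂ c d); linarith
      _ ≤ D2 * |a - c| + D2 * |b - d| := add_le_add h1 h2
      _ = D2 * (|a - c| + |b - d|) := by ring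
  -- bounds on F₁, F₂
  have bndF₁ : ∀ a ∈ Icc (0:ℝ) 1, ∀ b ∈ Icc (0:ℝ) 1, |A.F₁ a b| ≤ |A.F₁ 0 0| + 2 * D2 := by
    intro a ha b hb
    have h := lipF₁ a ha b hb 0 h00.1 0 h00.2
    have habs := abs_sub_abs_le_abs_sub (A.F₁ a b) (A.F₁ 0 0)
    have ha' : |a - 0| ≤ 1 := by rw [sub_zero, abs_of_nonneg ha.1]; exact ha.2
    have hb' : |b - 0| ≤ 1 := by rw [sub_zero, abs_of_nonneg hb.1]; exact hb.2
    nlinarith [abs_nonneg (a - 0), abs_nonneg (b - 0)]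
  have bndF₂ : ∀ a ∈ Icc (0:ℝ) 1, ∀ b ∈ Icc (0:ℝ) 1, |A.F₂ a b| ≤ |A.F₂ 0 0| + 2 * D2 := by
    intro a ha b hb
    have h := lipF₂ a ha b hb 0 h00.1 0 h00.2
    have habs := abs_sub_abs_le_abs_sub (A.F₂ a b) (A.F₂ 0 0)
    have ha' : |a - 0| ≤ 1 := by rw [sub_zero, abs_of_nonneg ha.1]; exact ha.2
    have hb' : |b - 0| ≤ 1 := by rw [sub_zero, abs_of_nonneg hb.1]; exact hb.2
    nlinarith [abs_nonneg (a - 0), abs_nonneg (b - 0)]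
  -- final constant
  set C : ℝ := |A.F₁ 0 0| + |A.F₂ 0 0| + 2 * D2 + L' with hC
  have hC0 : 0 ≤ C := by positivity
  have hD2C : D2 ≤ C := by
    rw [hC]; linarith [abs_nonneg (A.F₁ 0 0), abs_nonneg (A.F₂ 0 0), hD2nn, hL'0]
  refine ⟨C, hC0, ?_, ?_⟩
  · intro a ha b hb
    refine ⟨le_trans (bndF₁ a ha b hb) ?_, le_trans (bndF₂ a ha b hb) ?_, le_trans (hsecond a ha b hb).2.2 hD2C⟩
    · rw [hC]; linarith [abs_nonneg (A.F₂ 0 0), hL'0]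
    · rw [hC]; linarith [abs_nonneg (A.F₁ 0 0), hL'0]
  · intro a ha b hb c hc d hd
    have hsum0 : 0 ≤ |a - c| + |b - d| := by positivity
    refine ⟨?_, le_trans (lipF₁ a ha b hb c hc d hd) (by nlinarith), le_trans (lipF₂ a ha b hb c hc d hd) (by nlinarith), ?_⟩
    · -- F Lipschitz
      have h1 : |A.F a b - A.F c b| ≤ (|A.F₁ 0 0| + 2 * D2) * |a - c| := by
        have := Convex.norm_image_sub_le_of_norm_hasDerivWithin_le
          (f := fun t => A.F t b) (f' := fun t => A.F₁ t b) (s := Icc 0 1) (C := |A.F₁ 0 0| + 2 * D2)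
          (fun x hx => A.hd1 x hx b hb) (fun x hx => by rw [Real.norm_eq_abs]; exact bndF₁ x hx b hb)
          (convex_Icc 0 1) hc ha
        simpa [Real.norm_eq_abs] using this
      have h2 : |A.F c b - A.F c d| ≤ (|A.F₂ 0 0| + 2 * D2) * |b - d| := by
        have := Convex.norm_image_sub_le_of_norm_hasDerivWithin_le
          (f := fun t => A.F c t) (f' := fun t => A.F₂ c t) (s := Icc 0 1) (C := |A.F₂ 0 0| + 2 * D2)
          (fun x hx => A.hd2 c hc x hx) (fun x hx => by rw [Real.norm_eq_abs]; exact bndF₂ c hc x hx)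
          (convex_Icc 0 1) hd hb
        simpa [Real.norm_eq_abs] using this
      have htri := abs_sub_le (A.F a b) (A.F c b) (A.F c d)
      have hac : (|A.F₁ 0 0| + 2 * D2) * |a - c| ≤ C * |a - c| := by
        apply mul_le_mul_of_nonneg_right _ (abs_nonneg _)
        rw [hC]; linarith [abs_nonneg (A.F₂ 0 0), hL'0]
      have hbd' : (|A.F₂ 0 0| + 2 * D2) * |b - d| ≤ C * |b - d| := by
        apply mul_le_mul_of_nonneg_right _ (abs_nonneg _)
        rw [hC]; linarith [abs_nonneg (A.F₁ 0 0), hL'0]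
      calc |A.F a b - A.F c d| ≤ |A.F a b - A.F c b| + |A.F c b - A.F c d| := by linarith
        _ ≤ C * |a - c| + C * |b - d| := by linarith
        _ = C * (|a - c| + |b - d|) := by ring
    · -- F₁₂ Lipschitz
      have hmem1 : ((a, b) : ℝ × ℝ) ∈ Icc (0:ℝ) 1 ×ˢ Icc (0:ℝ) 1 := ⟨ha, hb⟩
      have hmem2 : ((c, d) : ℝ × ℝ) ∈ Icc (0:ℝ) 1 ×ˢ Icc (0:ℝ) 1 := ⟨hc, hd⟩
      have h := (hLip (a, b) hmem1 (c, d) hmem2).2.2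
      have hnp : ‖((a,b):ℝ×ℝ) - ((c,d):ℝ×ℝ)‖ ≤ |a - c| + |b - d| := norm_pair_le _ _
      have hLL' : L * ‖((a,b):ℝ×ℝ) - ((c,d):ℝ×ℝ)‖ ≤ L' * (|a - c| + |b - d|) := by
        have h1 : L * ‖((a,b):ℝ×ℝ) - ((c,d):ℝ×ℝ)‖ ≤ L' * ‖((a,b):ℝ×ℝ) - ((c,d):ℝ×ℝ)‖ :=
          mul_le_mul_of_nonneg_right (le_max_left _ _) (norm_nonneg _)
        exact le_trans h1 (mul_le_mul_of_nonneg_left hnp hL'0)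
      have hL'C : L' * (|a - c| + |b - d|) ≤ C * (|a - c| + |b - d|) := by
        apply mul_le_mul_of_nonneg_right _ hsum0
        rw [hC]; linarith [abs_nonneg (A.F₁ 0 0), abs_nonneg (A.F₂ 0 0), hD2nn]
      exact le_trans h (le_trans hLL' hL'C)

lemma lip_mul {s : Set (ℝ × ℝ)} {g h : ℝ × ℝ → ℝ} {Mg Lg Mh Lh : ℝ} (d : ℝ × ℝ → ℝ × ℝ → ℝ)
    (hd : ∀ p q, 0 ≤ d p q)
    (hgb : ∀ p ∈ s, |g p| ≤ Mg) (hhb : ∀ p ∈ s, |h p| ≤ Mh)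
    (hgl : ∀ p ∈ s, ∀ q ∈ s, |g p - g q| ≤ Lg * d p q)
    (hhl : ∀ p ∈ s, ∀ q ∈ s, |h p - h q| ≤ Lh * d p q) :
    ∀ p ∈ s, ∀ q ∈ s, |g p * h p - g q * h q| ≤ (Mg * Lh + Mh * Lg) * d p q := by
  intro p hp q hq
  have hMg : 0 ≤ Mg := le_trans (abs_nonneg _) (hgb p hp)
  have hMh : 0 ≤ Mh := le_trans (abs_nonneg _) (hhb q hq)
  have e : g p * h p - g q * h q = g p * (h p - h q) + (g p - g q) * h q := by ring
  calc |g p * h p - g q * h q| ≤ |g p| * |h p - h q| + |g p - g q| * |h q| := by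
        rw [e]
        refine le_trans (abs_add_le _ _) ?_
        rw [abs_mul, abs_mul]
    _ ≤ Mg * (Lh * d p q) + (Lg * d p q) * Mh := by
        refine add_le_add ?_ ?_
        · exact mul_le_mul (hgb p hp) (hhl p hp q hq) (abs_nonneg _) hMg
        · exact mul_le_mul (hgl p hp q hq) (hhb q hq) (abs_nonneg _)
            (le_trans (abs_nonneg _) (hgl p hp q hq))
    _ = (Mg * Lh + Mh * Lg) * d p q := by ring

lemma ae_fst {P : ℝ → Prop} (h : ∀ᵐ y ∂(volume : Measure ℝ), P y) :
    ∀ᵐ p ∂(volume : Measure (ℝ × ℝ)), P p.1 := by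
  rw [ae_iff] at h ⊢
  obtain ⟨N, hsub, hmeas, hN⟩ := exists_measurable_superset_of_null h
  refine measure_mono_null (fun p hp => ?_) (?_ : (volume : Measure (ℝ×ℝ)) (N ×ˢ (univ : Set ℝ)) = 0)
  · exact ⟨hsub hp, trivial⟩
  · show (Measure.prod volume volume) (N ×ˢ univ) = 0
    rw [Measure.prod_prod, hN, zero_mul]

lemma ae_snd {P : ℝ → Prop} (h : ∀ᵐ y ∂(volume : Measure ℝ), P y) :
    ∀ᵐ p ∂(volume : Measure (ℝ × ℝ)), P p.2 := by
  rw [ae_iff] at h ⊢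
  obtain ⟨N, hsub, hmeas, hN⟩ := exists_measurable_superset_of_null h
  refine measure_mono_null (fun p hp => ?_) (?_ : (volume : Measure (ℝ×ℝ)) ((univ : Set ℝ) ×ˢ N) = 0)
  · exact ⟨trivial, hsub hp⟩
  · show (Measure.prod volume volume) (univ ×ˢ N) = 0
    rw [Measure.prod_prod, hN, mul_zero]

lemma ae_ne_zero : ∀ᵐ y ∂(volume : Measure ℝ), y ≠ 0 := by
  rw [ae_iff]
  simp

end S11
set_option maxHeartbeats 2000000 in
/-- if `ψ₁, ψ₂` are one-dimensional cohesive densities with `sup ψᵢ = 1` and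
`F` is as above, then `Ψ(y₁,y₂) := F(ψ₁(y₁), ψ₂(y₂))` satisfies (Ψ1)–(Ψ4), where its
partial derivatives are given by the chain-rule formulas. -/
theorem statement11 (D₁ D₂ : CohesiveDensity) (A : AuxF)
    (hsup₁ : IsLUB (D₁.f '' Ici 0) 1) (hsup₂ : IsLUB (D₂.f '' Ici 0) 1) :
    let Ψ : ℝ → ℝ → ℝ := fun y₁ y₂ => A.F (D₁.f y₁) (D₂.f y₂)
    let Ψ₁ : ℝ → ℝ → ℝ := fun y₁ y₂ => A.F₁ (D₁.f y₁) (D₂.f y₂) * D₁.f' y₁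
    let Ψ₂ : ℝ → ℝ → ℝ := fun y₁ y₂ => A.F₂ (D₁.f y₁) (D₂.f y₂) * D₂.f' y₂
    let Ψ₁₂ : ℝ → ℝ → ℝ := fun y₁ y₂ => A.F₁₂ (D₁.f y₁) (D₂.f y₂) * D₁.f' y₁ * D₂.f' y₂
    let Ψ₁₁ : ℝ → ℝ → ℝ := fun y₁ y₂ =>
      A.F₁₁ (D₁.f y₁) (D₂.f y₂) * (D₁.f' y₁) ^ 2 + A.F₁ (D₁.f y₁) (D₂.f y₂) * D₁.f'' y₁
    let Ψ₂₂ : ℝ → ℝ → ℝ := fun y₁ y₂ =>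
      A.F₂₂ (D₁.f y₁) (D₂.f y₂) * (D₂.f' y₂) ^ 2 + A.F₂ (D₁.f y₁) (D₂.f y₂) * D₂.f'' y₂
    let Ψ₁₁₂ : ℝ → ℝ → ℝ := fun y₁ y₂ =>
      A.F₁₁₂ (D₁.f y₁) (D₂.f y₂) * (D₁.f' y₁) ^ 2 * D₂.f' y₂ +
        A.F₁₂ (D₁.f y₁) (D₂.f y₂) * D₁.f'' y₁ * D₂.f' y₂
    let Ψ₁₂₂ : ℝ → ℝ → ℝ := fun y₁ y₂ =>
      A.F₁₂₂ (D₁.f y₁) (D₂.f y₂) * D₁.f' y₁ * (D₂.f' y₂) ^ 2 +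
        A.F₁₂ (D₁.f y₁) (D₂.f y₂) * D₁.f' y₁ * D₂.f'' y₂
    -- (Ψ1)
    Ψ 0 0 = 0 ∧
    -- (Ψ2): boundedness
    (∃ M : ℝ, ∀ y₁ y₂ : ℝ, 0 ≤ y₁ → 0 ≤ y₂ → 0 ≤ Ψ y₁ y₂ ∧ Ψ y₁ y₂ ≤ M) ∧
    -- (Ψ2): Lipschitz continuity
    (∃ L : ℝ, ∀ y₁ y₂ y₁' y₂' : ℝ, 0 ≤ y₁ → 0 ≤ y₂ → 0 ≤ y₁' → 0 ≤ y₂' →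
      |Ψ y₁ y₂ - Ψ y₁' y₂'| ≤ L * (|y₁ - y₁'| + |y₂ - y₂'|)) ∧
    -- the chain-rule formulas are the actual partial derivatives on (0,∞)²
    (∀ y₁ y₂ : ℝ, 0 < y₁ → 0 < y₂ →
      HasDerivAt (fun t => Ψ t y₂) (Ψ₁ y₁ y₂) y₁ ∧
      HasDerivAt (fun t => Ψ y₁ t) (Ψ₂ y₁ y₂) y₂ ∧
      HasDerivAt (fun t => Ψ₁ y₁ t) (Ψ₁₂ y₁ y₂) y₂) ∧
    -- (Ψ2): local Lipschitz continuity of ∇Ψ and ∂₁₂Ψ on (0,∞)²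
    (∀ K : Set (ℝ × ℝ), IsCompact K → K ⊆ Ioi (0:ℝ) ×ˢ Ioi (0:ℝ) →
      ∃ L : ℝ, ∀ p ∈ K, ∀ q ∈ K,
        |Ψ₁ p.1 p.2 - Ψ₁ q.1 q.2| ≤ L * ‖p - q‖ ∧
        |Ψ₂ p.1 p.2 - Ψ₂ q.1 q.2| ≤ L * ‖p - q‖ ∧
        |Ψ₁₂ p.1 p.2 - Ψ₁₂ q.1 q.2| ≤ L * ‖p - q‖) ∧
    -- (Ψ3)
    (∀ᵐ p ∂(volume : Measure (ℝ × ℝ)), 0 ≤ p.1 → 0 ≤ p.2 →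
      0 ≤ Ψ₁ p.1 p.2 ∧ 0 ≤ Ψ₂ p.1 p.2 ∧ Ψ₁₂ p.1 p.2 ≤ 0 ∧
      max (p.1 * Ψ₁₁ p.1 p.2) 0 ≤ Ψ₁ p.1 p.2 ∧
      max (p.2 * Ψ₂₂ p.1 p.2) 0 ≤ Ψ₂ p.1 p.2 ∧
      Ψ₁₂ p.1 p.2 ≤ min (p.1 * Ψ₁₁₂ p.1 p.2) 0 ∧
      Ψ₁₂ p.1 p.2 ≤ min (p.2 * Ψ₁₂₂ p.1 p.2) 0) ∧
    -- (Ψ4)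
    (∃ M : ℝ, ∀ y₁ y₂ : ℝ, 0 < y₁ → 0 < y₂ → (y₁ + y₂) * |Ψ₁₂ y₁ y₂| ≤ M) := by

  intro Ψ Ψ₁ Ψ₂ Ψ₁₂ Ψ₁₁ Ψ₂₂ Ψ₁₁₂ Ψ₁₂₂
  obtain ⟨C, hC0, hCb, hClip⟩ := S11.auxF_bounds A
  obtain ⟨L₁, hL₁⟩ := D₁.lip
  obtain ⟨L₂, hL₂⟩ := D₂.lip
  set M₁ : ℝ := max L₁ 0 with hM₁
  set M₂ : ℝ := max L₂ 0 with hM₂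
  have hM₁0 : 0 ≤ M₁ := le_max_right _ _
  have hM₂0 : 0 ≤ M₂ := le_max_right _ _
  have hL₁' : ∀ x : ℝ, 0 ≤ x → ∀ y : ℝ, 0 ≤ y → |D₁.f x - D₁.f y| ≤ M₁ * |x - y| :=
    fun x hx y hy => le_trans (hL₁ x hx y hy)
      (mul_le_mul_of_nonneg_right (le_max_left _ _) (abs_nonneg _))
  have hL₂' : ∀ x : ℝ, 0 ≤ x → ∀ y : ℝ, 0 ≤ y → |D₂.f x - D₂.f y| ≤ M₂ * |x - y| :=
    fun x hx y hy => le_trans (hL₂ x hx y hy)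
      (mul_le_mul_of_nonneg_right (le_max_left _ _) (abs_nonneg _))
  have hf₁ := S11.mem01 D₁ hsup₁
  have hf₂ := S11.mem01 D₂ hsup₂
  have hd₁ : ∀ y : ℝ, 0 ≤ y → 0 ≤ D₁.f' y := S11.deriv_nonneg D₁
  have hd₂ : ∀ y : ℝ, 0 ≤ y → 0 ≤ D₂.f' y := S11.deriv_nonneg D₂
  have hub₁ : ∀ y : ℝ, 0 ≤ y → D₁.f' y ≤ M₁ := S11.deriv_le_lip D₁ hL₁'
  have hub₂ : ∀ y : ℝ, 0 ≤ y → D₂.f' y ≤ M₂ := S11.deriv_le_lip D₂ hL₂'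
  have m1 : Set.MapsTo D₁.f (Ici 0) (Icc 0 1) := fun y hy => hf₁ y hy
  have m2 : Set.MapsTo D₂.f (Ici 0) (Icc 0 1) := fun y hy => hf₂ y hy
  refine ⟨?_, ?_, ?_, ?_, ?_, ?_, ?_⟩
  · -- (Ψ1)
    show A.F (D₁.f 0) (D₂.f 0) = 0
    rw [D₁.zero, D₂.zero, A.zero]
  · -- boundedness
    refine ⟨2 * C, fun y₁ y₂ h1 h2 => ⟨A.nonneg _ (hf₁ y₁ h1) _ (hf₂ y₂ h2), ?_⟩⟩
    have h00 : (0:ℝ) ∈ Icc (0:ℝ) 1 := ⟨le_refl _, zero_le_one⟩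
    have h := (hClip (D₁.f y₁) (hf₁ y₁ h1) (D₂.f y₂) (hf₂ y₂ h2) 0 h00 0 h00).1
    rw [A.zero, sub_zero] at h
    have hu := hf₁ y₁ h1
    have hv := hf₂ y₂ h2
    have h1' : |D₁.f y₁ - 0| ≤ 1 := by rw [sub_zero, abs_of_nonneg hu.1]; exact hu.2
    have h2' : |D₂.f y₂ - 0| ≤ 1 := by rw [sub_zero, abs_of_nonneg hv.1]; exact hv.2
    have := le_abs_self (A.F (D₁.f y₁) (D₂.f y₂))
    nlinarith
  · -- Lipschitz
    refine ⟨C * (M₁ + M₂), fun y₁ y₂ y₁' y₂' h1 h2 h1' h2' => ?_⟩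
    have h := (hClip (D₁.f y₁) (hf₁ y₁ h1) (D₂.f y₂) (hf₂ y₂ h2)
      (D₁.f y₁') (hf₁ y₁' h1') (D₂.f y₂') (hf₂ y₂' h2')).1
    have ha := hL₁' y₁ h1 y₁' h1'
    have hb := hL₂' y₂ h2 y₂' h2'
    have hd1 : (0:ℝ) ≤ |y₁ - y₁'| := abs_nonneg _
    have hd2 : (0:ℝ) ≤ |y₂ - y₂'| := abs_nonneg _
    have hd3 : (0:ℝ) ≤ |D₁.f y₁ - D₁.f y₁'| := abs_nonneg _
    have hd4 : (0:ℝ) ≤ |D₂.f y₂ - D₂.f y₂'| := abs_nonneg _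
    nlinarith [mul_le_mul_of_nonneg_left ha hC0, mul_le_mul_of_nonneg_left hb hC0,
      mul_nonneg hC0 (mul_nonneg hM₁0 hd2), mul_nonneg hC0 (mul_nonneg hM₂0 hd1)]
  · -- chain rule
    intro y₁ y₂ hy₁ hy₂
    have hu := hf₁ y₁ (le_of_lt hy₁)
    have hv := hf₂ y₂ (le_of_lt hy₂)
    refine ⟨?_, ?_, ?_⟩
    · have h := HasDerivWithinAt.comp y₁ (A.hd1 (D₁.f y₁) hu (D₂.f y₂) hv)
        ((D₁.deriv_at y₁ hy₁).hasDerivWithinAt) m1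
      exact h.hasDerivAt (Ici_mem_nhds hy₁)
    · have h := HasDerivWithinAt.comp y₂ (A.hd2 (D₁.f y₁) hu (D₂.f y₂) hv)
        ((D₂.deriv_at y₂ hy₂).hasDerivWithinAt) m2
      exact h.hasDerivAt (Ici_mem_nhds hy₂)
    · have h := (HasDerivWithinAt.comp y₂ (A.hd12 (D₁.f y₁) hu (D₂.f y₂) hv)
        ((D₂.deriv_at y₂ hy₂).hasDerivWithinAt) m2).mul_const (D₁.f' y₁)
      have h' := h.hasDerivAt (Ici_mem_nhds hy₂)
      have he : A.F₁₂ (D₁.f y₁) (D₂.f y₂) * D₁.f' y₁ * D₂.f' y₂ =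
          A.F₁₂ (D₁.f y₁) (D₂.f y₂) * D₂.f' y₂ * D₁.f' y₁ := by ring
      show HasDerivAt (fun t => A.F₁ (D₁.f y₁) (D₂.f t) * D₁.f' y₁)
        (A.F₁₂ (D₁.f y₁) (D₂.f y₂) * D₁.f' y₁ * D₂.f' y₂) y₂
      rw [he]
      exact h'
  · -- local Lipschitz
    intro K hK hKsub
    rcases K.eq_empty_or_nonempty with rfl | hne
    · exact ⟨0, by simp⟩
    obtain ⟨r, hr⟩ := isBounded_iff_forall_norm_le.mp hK.isBounded
    set b : ℝ := max r 1 with hb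
    have hb0 : (0:ℝ) < b := lt_of_lt_of_le zero_lt_one (le_max_right _ _)
    have hbox : ∀ p ∈ K, p.1 ∈ Icc (0:ℝ) b ∧ p.2 ∈ Icc (0:ℝ) b := by
      intro p hp
      have h1 : 0 < p.1 := (hKsub hp).1
      have h2 : 0 < p.2 := (hKsub hp).2
      have hn := hr p hp
      have hn1 : p.1 ≤ b := le_trans (le_trans (le_abs_self _)
        (by simpa [Real.norm_eq_abs] using norm_fst_le p)) (le_trans hn (le_max_left _ _))
      have hn2 : p.2 ≤ b := le_trans (le_trans (le_abs_self _)
        (by simpa [Real.norm_eq_abs] using norm_snd_le p)) (le_trans hn (le_max_left _ _))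
      exact ⟨⟨le_of_lt h1, hn1⟩, ⟨le_of_lt h2, hn2⟩⟩
    obtain ⟨Lb₁, hLb₁⟩ := D₁.deriv_locLip b hb0
    obtain ⟨Lb₂, hLb₂⟩ := D₂.deriv_locLip b hb0
    set Lb : ℝ := max (max Lb₁ Lb₂) 0 with hLbdef
    have hLb0 : (0:ℝ) ≤ Lb := le_max_right _ _
    set dd : ℝ × ℝ → ℝ × ℝ → ℝ := fun p q => |p.1 - q.1| + |p.2 - q.2| with hdd
    have hdn : ∀ p q : ℝ × ℝ, 0 ≤ dd p q := fun p q => by positivity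
    set CM : ℝ := C * (M₁ + M₂) with hCM
    have hCM0 : 0 ≤ CM := mul_nonneg hC0 (add_nonneg hM₁0 hM₂0)
    -- component estimates
    have hg₁b : ∀ p ∈ K, |A.F₁ (D₁.f p.1) (D₂.f p.2)| ≤ C := fun p hp =>
      (hCb _ (hf₁ _ (hbox p hp).1.1) _ (hf₂ _ (hbox p hp).2.1)).1
    have hg₂b : ∀ p ∈ K, |A.F₂ (D₁.f p.1) (D₂.f p.2)| ≤ C := fun p hp =>
      (hCb _ (hf₁ _ (hbox p hp).1.1) _ (hf₂ _ (hbox p hp).2.1)).2.1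
    have hg₁₂b : ∀ p ∈ K, |A.F₁₂ (D₁.f p.1) (D₂.f p.2)| ≤ C := fun p hp =>
      (hCb _ (hf₁ _ (hbox p hp).1.1) _ (hf₂ _ (hbox p hp).2.1)).2.2
    have hcomp : ∀ p ∈ K, ∀ q ∈ K,
        |D₁.f p.1 - D₁.f q.1| ≤ M₁ * |p.1 - q.1| ∧ |D₂.f p.2 - D₂.f q.2| ≤ M₂ * |p.2 - q.2| :=
      fun p hp q hq => ⟨hL₁' p.1 (hbox p hp).1.1 q.1 (hbox q hq).1.1,
        hL₂' p.2 (hbox p hp).2.1 q.2 (hbox q hq).2.1⟩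
    have hFlip : ∀ Z : ℝ → ℝ → ℝ,
        (∀ a ∈ Icc (0:ℝ) 1, ∀ b' ∈ Icc (0:ℝ) 1, ∀ c ∈ Icc (0:ℝ) 1, ∀ e ∈ Icc (0:ℝ) 1,
          |Z a b' - Z c e| ≤ C * (|a - c| + |b' - e|)) →
        ∀ p ∈ K, ∀ q ∈ K,
          |Z (D₁.f p.1) (D₂.f p.2) - Z (D₁.f q.1) (D₂.f q.2)| ≤ CM * dd p q := by
      intro Z hZ p hp q hq
      have h := hZ (D₁.f p.1) (hf₁ _ (hbox p hp).1.1) (D₂.f p.2) (hf₂ _ (hbox p hp).2.1)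
        (D₁.f q.1) (hf₁ _ (hbox q hq).1.1) (D₂.f q.2) (hf₂ _ (hbox q hq).2.1)
      obtain ⟨ha, hb'⟩ := hcomp p hp q hq
      have hd1 : (0:ℝ) ≤ |p.1 - q.1| := abs_nonneg _
      have hd2 : (0:ℝ) ≤ |p.2 - q.2| := abs_nonneg _
      have := mul_le_mul_of_nonneg_left ha hC0
      have := mul_le_mul_of_nonneg_left hb' hC0
      show _ ≤ CM * (|p.1 - q.1| + |p.2 - q.2|)
      rw [hCM]
      nlinarith [mul_nonneg hC0 (mul_nonneg hM₁0 hd2), mul_nonneg hC0 (mul_nonneg hM₂0 hd1),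
        abs_nonneg (D₁.f p.1 - D₁.f q.1), abs_nonneg (D₂.f p.2 - D₂.f q.2)]
    have hg₁l := hFlip A.F₁ (fun a ha b' hb' c hc e he => (hClip a ha b' hb' c hc e he).2.1)
    have hg₂l := hFlip A.F₂ (fun a ha b' hb' c hc e he => (hClip a ha b' hb' c hc e he).2.2.1)
    have hg₁₂l := hFlip A.F₁₂ (fun a ha b' hb' c hc e he => (hClip a ha b' hb' c hc e he).2.2.2)
    have hh₁b : ∀ p ∈ K, |D₁.f' p.1| ≤ M₁ := by
      intro p hp
      rw [abs_of_nonneg (hd₁ _ (hbox p hp).1.1)]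
      exact hub₁ _ (hbox p hp).1.1
    have hh₂b : ∀ p ∈ K, |D₂.f' p.2| ≤ M₂ := by
      intro p hp
      rw [abs_of_nonneg (hd₂ _ (hbox p hp).2.1)]
      exact hub₂ _ (hbox p hp).2.1
    have hh₁l : ∀ p ∈ K, ∀ q ∈ K, |D₁.f' p.1 - D₁.f' q.1| ≤ Lb * dd p q := by
      intro p hp q hq
      have h := hLb₁ p.1 (hbox p hp).1 q.1 (hbox q hq).1
      have h1 : Lb₁ * |p.1 - q.1| ≤ Lb * |p.1 - q.1| :=
        mul_le_mul_of_nonneg_right (le_trans (le_max_left _ _) (le_max_left _ _)) (abs_nonneg _)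
      have h2 : Lb * |p.1 - q.1| ≤ Lb * dd p q :=
        mul_le_mul_of_nonneg_left (le_add_of_nonneg_right (abs_nonneg _)) hLb0
      linarith
    have hh₂l : ∀ p ∈ K, ∀ q ∈ K, |D₂.f' p.2 - D₂.f' q.2| ≤ Lb * dd p q := by
      intro p hp q hq
      have h := hLb₂ p.2 (hbox p hp).2 q.2 (hbox q hq).2
      have h1 : Lb₂ * |p.2 - q.2| ≤ Lb * |p.2 - q.2| :=
        mul_le_mul_of_nonneg_right (le_trans (le_max_right _ _) (le_max_left _ _)) (abs_nonneg _)
      have h2 : Lb * |p.2 - q.2| ≤ Lb * dd p q :=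
        mul_le_mul_of_nonneg_left (le_add_of_nonneg_left (abs_nonneg _)) hLb0
      linarith
    -- products
    have P1 := S11.lip_mul (s := K) dd hdn hg₁b hh₁b hg₁l hh₁l
    have P2 := S11.lip_mul (s := K) dd hdn hg₂b hh₂b hg₂l hh₂l
    have Pu := S11.lip_mul (s := K) dd hdn hg₁₂b hh₁b hg₁₂l hh₁l
    have hub : ∀ p ∈ K, |A.F₁₂ (D₁.f p.1) (D₂.f p.2) * D₁.f' p.1| ≤ C * M₁ := by
      intro p hp
      rw [abs_mul]
      exact mul_le_mul (hg₁₂b p hp) (hh₁b p hp) (abs_nonneg _) hC0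
    have P12 := S11.lip_mul (s := K) dd hdn hub hh₂b Pu hh₂l
    -- constants
    set E₁ : ℝ := C * Lb + M₁ * CM with hE₁
    set E₂ : ℝ := C * Lb + M₂ * CM with hE₂
    set E₃ : ℝ := C * M₁ * Lb + M₂ * (C * Lb + M₁ * CM) with hE₃
    have hE₁0 : 0 ≤ E₁ := by positivity
    have hE₂0 : 0 ≤ E₂ := by positivity
    have hE₃0 : 0 ≤ E₃ := by positivity
    refine ⟨2 * (E₁ + E₂ + E₃), fun p hp q hq => ?_⟩
    have hdle : dd p q ≤ 2 * ‖p - q‖ := by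
      have h1 : |p.1 - q.1| ≤ ‖p - q‖ := by
        simpa [Real.norm_eq_abs] using norm_fst_le (p - q)
      have h2 : |p.2 - q.2| ≤ ‖p - q‖ := by
        simpa [Real.norm_eq_abs] using norm_snd_le (p - q)
      show |p.1 - q.1| + |p.2 - q.2| ≤ 2 * ‖p - q‖
      linarith
    have hnn : (0:ℝ) ≤ ‖p - q‖ := norm_nonneg _
    have key : ∀ X : ℝ, 0 ≤ X → X ≤ E₁ + E₂ + E₃ → X * dd p q ≤ 2 * (E₁ + E₂ + E₃) * ‖p - q‖ := by
      intro X hX0 hXle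
      calc X * dd p q ≤ X * (2 * ‖p - q‖) := mul_le_mul_of_nonneg_left hdle hX0
        _ ≤ (E₁ + E₂ + E₃) * (2 * ‖p - q‖) := by
            apply mul_le_mul_of_nonneg_right hXle; positivity
        _ = 2 * (E₁ + E₂ + E₃) * ‖p - q‖ := by ring
    exact ⟨le_trans (P1 p hp q hq) (key E₁ hE₁0 (by linarith)),
      le_trans (P2 p hp q hq) (key E₂ hE₂0 (by linarith)),
      le_trans (P12 p hp q hq) (key E₃ hE₃0 (by linarith))⟩
  · -- (Ψ3)
    filter_upwards [S11.ae_fst D₁.psi_a, S11.ae_snd D₂.psi_a,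
      S11.ae_fst S11.ae_ne_zero, S11.ae_snd S11.ae_ne_zero] with p h1 h2 h3 h4
    intro hp1 hp2
    have hp1' : 0 < p.1 := lt_of_le_of_ne hp1 (Ne.symm h3)
    have hp2' : 0 < p.2 := lt_of_le_of_ne hp2 (Ne.symm h4)
    have ha1 := h1 hp1'
    have ha2 := h2 hp2'
    have hu := hf₁ p.1 hp1
    have hv := hf₂ p.2 hp2
    obtain ⟨s1, s2, s3, s4, s5, s6, s7⟩ := A.signs (D₁.f p.1) hu (D₂.f p.2) hv
    have k1 := hd₁ p.1 hp1
    have k2 := hd₂ p.2 hp2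
    refine ⟨mul_nonneg s1 k1, mul_nonneg s2 k2, ?_, ?_, ?_, ?_, ?_⟩
    · exact mul_nonpos_of_nonpos_of_nonneg (mul_nonpos_of_nonpos_of_nonneg s5 k1) k2
    · refine max_le ?_ (mul_nonneg s1 k1)
      have e1 : p.1 * A.F₁₁ (D₁.f p.1) (D₂.f p.2) * D₁.f' p.1 ^ 2 ≤ 0 := by
        have := mul_nonneg hp1 (sq_nonneg (D₁.f' p.1))
        nlinarith
      have e2 : A.F₁ (D₁.f p.1) (D₂.f p.2) * (p.1 * D₁.f'' p.1)
          ≤ A.F₁ (D₁.f p.1) (D₂.f p.2) * D₁.f' p.1 :=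
        mul_le_mul_of_nonneg_left (by linarith) s1
      show p.1 * (A.F₁₁ (D₁.f p.1) (D₂.f p.2) * D₁.f' p.1 ^ 2
          + A.F₁ (D₁.f p.1) (D₂.f p.2) * D₁.f'' p.1)
          ≤ A.F₁ (D₁.f p.1) (D₂.f p.2) * D₁.f' p.1
      nlinarith
    · refine max_le ?_ (mul_nonneg s2 k2)
      have e1 : p.2 * A.F₂₂ (D₁.f p.1) (D₂.f p.2) * D₂.f' p.2 ^ 2 ≤ 0 := by
        have := mul_nonneg hp2 (sq_nonneg (D₂.f' p.2))
        nlinarith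
      have e2 : A.F₂ (D₁.f p.1) (D₂.f p.2) * (p.2 * D₂.f'' p.2)
          ≤ A.F₂ (D₁.f p.1) (D₂.f p.2) * D₂.f' p.2 :=
        mul_le_mul_of_nonneg_left (by linarith) s2
      show p.2 * (A.F₂₂ (D₁.f p.1) (D₂.f p.2) * D₂.f' p.2 ^ 2
          + A.F₂ (D₁.f p.1) (D₂.f p.2) * D₂.f'' p.2)
          ≤ A.F₂ (D₁.f p.1) (D₂.f p.2) * D₂.f' p.2
      nlinarith
    · refine le_min ?_
        (mul_nonpos_of_nonpos_of_nonneg (mul_nonpos_of_nonpos_of_nonneg s5 k1) k2)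
      have e1 : 0 ≤ p.1 * (A.F₁₁₂ (D₁.f p.1) (D₂.f p.2) * D₁.f' p.1 ^ 2 * D₂.f' p.2) :=
        mul_nonneg hp1 (mul_nonneg (mul_nonneg s6 (sq_nonneg _)) k2)
      have e2 : A.F₁₂ (D₁.f p.1) (D₂.f p.2) * D₂.f' p.2 * D₁.f' p.1
          ≤ A.F₁₂ (D₁.f p.1) (D₂.f p.2) * D₂.f' p.2 * (p.1 * D₁.f'' p.1) :=
        mul_le_mul_of_nonpos_left (by linarith) (mul_nonpos_of_nonpos_of_nonneg s5 k2)
      show A.F₁₂ (D₁.f p.1) (D₂.f p.2) * D₁.f' p.1 * D₂.f' p.2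
          ≤ p.1 * (A.F₁₁₂ (D₁.f p.1) (D₂.f p.2) * D₁.f' p.1 ^ 2 * D₂.f' p.2
            + A.F₁₂ (D₁.f p.1) (D₂.f p.2) * D₁.f'' p.1 * D₂.f' p.2)
      nlinarith
    · refine le_min ?_
        (mul_nonpos_of_nonpos_of_nonneg (mul_nonpos_of_nonpos_of_nonneg s5 k1) k2)
      have e1 : 0 ≤ p.2 * (A.F₁₂₂ (D₁.f p.1) (D₂.f p.2) * D₁.f' p.1 * D₂.f' p.2 ^ 2) :=
        mul_nonneg hp2 (mul_nonneg (mul_nonneg s7 k1) (sq_nonneg _))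
      have e2 : A.F₁₂ (D₁.f p.1) (D₂.f p.2) * D₁.f' p.1 * D₂.f' p.2
          ≤ A.F₁₂ (D₁.f p.1) (D₂.f p.2) * D₁.f' p.1 * (p.2 * D₂.f'' p.2) :=
        mul_le_mul_of_nonpos_left (by linarith) (mul_nonpos_of_nonpos_of_nonneg s5 k1)
      show A.F₁₂ (D₁.f p.1) (D₂.f p.2) * D₁.f' p.1 * D₂.f' p.2
          ≤ p.2 * (A.F₁₂₂ (D₁.f p.1) (D₂.f p.2) * D₁.f' p.1 * D₂.f' p.2 ^ 2
            + A.F₁₂ (D₁.f p.1) (D₂.f p.2) * D₁.f' p.1 * D₂.f'' p.2)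
      nlinarith
  · -- (Ψ4)
    obtain ⟨B₁, hB₁⟩ := D₁.psi_b
    obtain ⟨B₂, hB₂⟩ := D₂.psi_b
    have hB₁0 : 0 ≤ B₁ := le_trans (by simpa using hd₁ 1 zero_le_one) (by simpa using hB₁ 1 zero_lt_one)
    have hB₂0 : 0 ≤ B₂ := le_trans (by simpa using hd₂ 1 zero_le_one) (by simpa using hB₂ 1 zero_lt_one)
    refine ⟨C * (B₁ * M₂ + B₂ * M₁), fun y₁ y₂ hy₁ hy₂ => ?_⟩
    have k1 := hd₁ y₁ (le_of_lt hy₁)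
    have k2 := hd₂ y₂ (le_of_lt hy₂)
    have hu := hf₁ y₁ (le_of_lt hy₁)
    have hv := hf₂ y₂ (le_of_lt hy₂)
    have habs : |A.F₁₂ (D₁.f y₁) (D₂.f y₂)| ≤ C := (hCb _ hu _ hv).2.2
    have hb1 := hB₁ y₁ hy₁
    have hb2 := hB₂ y₂ hy₂
    have hyf1 : 0 ≤ y₁ * D₁.f' y₁ := mul_nonneg (le_of_lt hy₁) k1
    have hyf2 : 0 ≤ y₂ * D₂.f' y₂ := mul_nonneg (le_of_lt hy₂) k2
    have hm1 := hub₁ y₁ (le_of_lt hy₁)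
    have hm2 := hub₂ y₂ (le_of_lt hy₂)
    have heq : (y₁ + y₂) * |A.F₁₂ (D₁.f y₁) (D₂.f y₂) * D₁.f' y₁ * D₂.f' y₂|
        = (y₁ + y₂) * (|A.F₁₂ (D₁.f y₁) (D₂.f y₂)| * D₁.f' y₁ * D₂.f' y₂) := by
      rw [abs_mul, abs_mul, abs_of_nonneg k1, abs_of_nonneg k2]
    show (y₁ + y₂) * |A.F₁₂ (D₁.f y₁) (D₂.f y₂) * D₁.f' y₁ * D₂.f' y₂|
        ≤ C * (B₁ * M₂ + B₂ * M₁)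
    rw [heq]
    have t1 : |A.F₁₂ (D₁.f y₁) (D₂.f y₂)| * (y₁ * D₁.f' y₁) * D₂.f' y₂ ≤ C * B₁ * M₂ := by
      refine mul_le_mul (mul_le_mul habs hb1 hyf1 hC0) hm2 k2 ?_
      exact mul_nonneg hC0 hB₁0
    have t2 : |A.F₁₂ (D₁.f y₁) (D₂.f y₂)| * (y₂ * D₂.f' y₂) * D₁.f' y₁ ≤ C * B₂ * M₁ := by
      refine mul_le_mul (mul_le_mul habs hb2 hyf2 hC0) hm1 k1 ?_
      exact mul_nonneg hC0 hB₂0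
    nlinarith [abs_nonneg (A.F₁₂ (D₁.f y₁) (D₂.f y₂))]
end

section
/- Let ψ₁, ψ₂ be one-dimensional cohesive densities with sup ψᵢ = 1 which are moreover concave on [0,∞), and let F ∈ C^{2,1}([0,1]²) be nonnegative with F(0,0)=0, ∂ᵢF ≥ 0, ∂ᵢᵢF ≤ 0, ∂₁₂F ≤ 0, ∂ᵢᵢⱼF ≥ 0 on [0,1]² for i ≠ j. Define Ψ(y₁,y₂) := F(ψ₁(y₁),ψ₂(y₂)). Then Ψ satisfies (Ψ6): for i,j ∈ {1,2} with j ≠ i, a.e. on [0,∞)² one has 2∂ᵢᵢΨ(y₁,y₂) ≤ min(y_j ∂ᵢᵢⱼΨ(y₁,y₂), 0). -/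
open MeasureTheory Set

section Aux

/-- On a set `(0,∞)`, the derivative of an antitone function is nonpositive. -/
lemma antitoneOn_hasDerivAt_nonpos {g : ℝ → ℝ} {y c : ℝ} (hy : 0 < y)
    (hg : AntitoneOn g (Ioi 0)) (h : HasDerivAt g c y) : c ≤ 0 := by
  have htend : Filter.Tendsto (slope g y) (nhdsWithin y (Ioi y)) (nhds c) :=
    (hasDerivAt_iff_tendsto_slope.1 h).mono_left
      (nhdsWithin_mono _ (fun z hz => ne_of_gt hz))
  refine le_of_tendsto htend ?_
  filter_upwards [self_mem_nhdsWithin] with z hz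
  have hzy : y < z := hz
  have : g z ≤ g y := hg hy (lt_trans hy hzy) hzy.le
  have hpos : 0 < z - y := by linarith
  rw [slope_def_field]
  have : g z - g y ≤ 0 := by linarith
  exact div_nonpos_of_nonpos_of_nonneg this hpos.le

/-- The derivative of a monotone function on `(0,∞)` is nonnegative. -/
lemma monotoneOn_hasDerivAt_nonneg {g : ℝ → ℝ} {y c : ℝ} (hy : 0 < y)
    (hg : MonotoneOn g (Ici 0)) (h : HasDerivAt g c y) : 0 ≤ c := by
  have htend : Filter.Tendsto (slope g y) (nhdsWithin y (Ioi y)) (nhds c) :=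
    (hasDerivAt_iff_tendsto_slope.1 h).mono_left
      (nhdsWithin_mono _ (fun z hz => ne_of_gt hz))
  refine ge_of_tendsto htend ?_
  filter_upwards [self_mem_nhdsWithin] with z hz
  have hzy : y < z := hz
  have : g y ≤ g z := hg hy.le (le_of_lt (lt_trans hy hzy)) hzy.le
  have hpos : 0 < z - y := by linarith
  rw [slope_def_field]
  exact div_nonneg (by linarith) hpos.le

/-- First derivative of a cohesive density is nonnegative at positive points. -/
lemma CohesiveDensity.f'_nonneg (D : CohesiveDensity) {y : ℝ} (hy : 0 < y) : 0 ≤ D.f' y :=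
  monotoneOn_hasDerivAt_nonneg hy D.mono (D.deriv_at y hy)

/-- For a concave cohesive density, `f'` is antitone on `(0,∞)`. -/
lemma CohesiveDensity.f'_antitone (D : CohesiveDensity) (hconc : ConcaveOn ℝ (Ici 0) D.f) :
    AntitoneOn D.f' (Ioi 0) := by
  have hc : ConcaveOn ℝ (Ioi (0:ℝ)) D.f := hconc.subset Ioi_subset_Ici_self (convex_Ioi 0)
  have hd : AntitoneOn (deriv D.f) (Ioi 0) :=
    hc.antitoneOn_deriv (fun x hx => (D.deriv_at x hx).differentiableAt)
  intro a ha b hb hab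
  rw [← (D.deriv_at a ha).deriv, ← (D.deriv_at b hb).deriv]
  exact hd ha hb hab

/-- Values of a cohesive density lie in `[0,1]` when its sup is `1`. -/
lemma CohesiveDensity.mem_Icc (D : CohesiveDensity) (hsup : IsLUB (D.f '' Ici 0) 1)
    {y : ℝ} (hy : 0 ≤ y) : D.f y ∈ Icc (0:ℝ) 1 :=
  ⟨D.nonneg y hy, hsup.1 ⟨y, hy, rfl⟩⟩

end Aux

/-- if moreover `ψ₁, ψ₂` are concave on `[0,∞)`, then `Ψ` satisfies (Ψ6):
for `i ≠ j`, `2∂ᵢᵢΨ ≤ min(y_j ∂ᵢᵢⱼΨ, 0)` a.e. on `[0,∞)²` (with the partial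
derivatives given by the chain-rule formulas). -/
theorem statement13 (D₁ D₂ : CohesiveDensity) (A : AuxF)
    (hsup₁ : IsLUB (D₁.f '' Ici 0) 1) (hsup₂ : IsLUB (D₂.f '' Ici 0) 1)
    (hconc₁ : ConcaveOn ℝ (Ici 0) D₁.f) (hconc₂ : ConcaveOn ℝ (Ici 0) D₂.f) :
    let Ψ₁₁ : ℝ → ℝ → ℝ := fun y₁ y₂ =>
      A.F₁₁ (D₁.f y₁) (D₂.f y₂) * (D₁.f' y₁) ^ 2 + A.F₁ (D₁.f y₁) (D₂.f y₂) * D₁.f'' y₁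
    let Ψ₂₂ : ℝ → ℝ → ℝ := fun y₁ y₂ =>
      A.F₂₂ (D₁.f y₁) (D₂.f y₂) * (D₂.f' y₂) ^ 2 + A.F₂ (D₁.f y₁) (D₂.f y₂) * D₂.f'' y₂
    let Ψ₁₁₂ : ℝ → ℝ → ℝ := fun y₁ y₂ =>
      A.F₁₁₂ (D₁.f y₁) (D₂.f y₂) * (D₁.f' y₁) ^ 2 * D₂.f' y₂ +
        A.F₁₂ (D₁.f y₁) (D₂.f y₂) * D₁.f'' y₁ * D₂.f' y₂
    let Ψ₁₂₂ : ℝ → ℝ → ℝ := fun y₁ y₂ =>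
      A.F₁₂₂ (D₁.f y₁) (D₂.f y₂) * D₁.f' y₁ * (D₂.f' y₂) ^ 2 +
        A.F₁₂ (D₁.f y₁) (D₂.f y₂) * D₁.f' y₁ * D₂.f'' y₂
    ∀ᵐ p ∂(volume : Measure (ℝ × ℝ)), 0 ≤ p.1 → 0 ≤ p.2 →
      2 * Ψ₁₁ p.1 p.2 ≤ min (p.2 * Ψ₁₁₂ p.1 p.2) 0 ∧
      2 * Ψ₂₂ p.1 p.2 ≤ min (p.1 * Ψ₁₂₂ p.1 p.2) 0 := by
  intro Ψ₁₁ Ψ₂₂ Ψ₁₁₂ Ψ₁₂₂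
  have hne : ∀ᵐ y ∂(volume : Measure ℝ), y ≠ 0 := by
    rw [MeasureTheory.ae_iff]
    simpa using MeasureTheory.measure_singleton (0:ℝ)
  have h1 : ∀ᵐ y ∂(volume : Measure ℝ),
      (0 < y → HasDerivAt D₁.f' (D₁.f'' y) y) ∧ y ≠ 0 := D₁.snd_deriv_ae.and hne
  have h2 : ∀ᵐ y ∂(volume : Measure ℝ),
      (0 < y → HasDerivAt D₂.f' (D₂.f'' y) y) ∧ y ≠ 0 := D₂.snd_deriv_ae.and hne
  have hvol : (volume : Measure (ℝ × ℝ)) = (volume : Measure ℝ).prod volume :=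
    Measure.volume_eq_prod ℝ ℝ
  have hfst : ∀ᵐ p : ℝ × ℝ ∂volume,
      (0 < p.1 → HasDerivAt D₁.f' (D₁.f'' p.1) p.1) ∧ p.1 ≠ 0 := by
    rw [hvol]; exact Measure.quasiMeasurePreserving_fst.ae h1
  have hsnd : ∀ᵐ p : ℝ × ℝ ∂volume,
      (0 < p.2 → HasDerivAt D₂.f' (D₂.f'' p.2) p.2) ∧ p.2 ≠ 0 := by
    rw [hvol]; exact Measure.quasiMeasurePreserving_snd.ae h2
  filter_upwards [hfst, hsnd] with p hp1 hp2 h1nn h2nn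
  have hy1 : 0 < p.1 := lt_of_le_of_ne h1nn (Ne.symm hp1.2)
  have hy2 : 0 < p.2 := lt_of_le_of_ne h2nn (Ne.symm hp2.2)
  have hm1 := D₁.mem_Icc hsup₁ h1nn
  have hm2 := D₂.mem_Icc hsup₂ h2nn
  obtain ⟨hF₁, hF₂, hF₁₁, hF₂₂, hF₁₂, hF₁₁₂, hF₁₂₂⟩ :=
    A.signs (D₁.f p.1) hm1 (D₂.f p.2) hm2
  have hf1' : 0 ≤ D₁.f' p.1 := D₁.f'_nonneg hy1
  have hf2' : 0 ≤ D₂.f' p.2 := D₂.f'_nonneg hy2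
  have hf1'' : D₁.f'' p.1 ≤ 0 :=
    antitoneOn_hasDerivAt_nonpos hy1 (D₁.f'_antitone hconc₁) (hp1.1 hy1)
  have hf2'' : D₂.f'' p.2 ≤ 0 :=
    antitoneOn_hasDerivAt_nonpos hy2 (D₂.f'_antitone hconc₂) (hp2.1 hy2)
  have hsq1 : (0:ℝ) ≤ (D₁.f' p.1) ^ 2 := sq_nonneg _
  have hsq2 : (0:ℝ) ≤ (D₂.f' p.2) ^ 2 := sq_nonneg _
  have hw2 : 0 ≤ p.2 * D₂.f' p.2 := mul_nonneg h2nn hf2'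
  have hw1 : 0 ≤ p.1 * D₁.f' p.1 := mul_nonneg h1nn hf1'
  constructor
  · refine le_min ?_ ?_
    · have t1 : 0 ≤ A.F₁₁₂ (D₁.f p.1) (D₂.f p.2) * (D₁.f' p.1) ^ 2 * (p.2 * D₂.f' p.2) :=
        mul_nonneg (mul_nonneg hF₁₁₂ hsq1) hw2
      have t2 : 0 ≤ A.F₁₂ (D₁.f p.1) (D₂.f p.2) * D₁.f'' p.1 * (p.2 * D₂.f' p.2) :=
        mul_nonneg (by nlinarith) hw2
      have t3 : A.F₁₁ (D₁.f p.1) (D₂.f p.2) * (D₁.f' p.1) ^ 2 ≤ 0 := mul_nonpos_of_nonpos_of_nonneg hF₁₁ hsq1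
      have t4 : A.F₁ (D₁.f p.1) (D₂.f p.2) * D₁.f'' p.1 ≤ 0 := mul_nonpos_of_nonneg_of_nonpos hF₁ hf1''
      simp only [Ψ₁₁, Ψ₁₁₂]
      nlinarith [t1, t2, t3, t4]
    · have t3 : A.F₁₁ (D₁.f p.1) (D₂.f p.2) * (D₁.f' p.1) ^ 2 ≤ 0 := mul_nonpos_of_nonpos_of_nonneg hF₁₁ hsq1
      have t4 : A.F₁ (D₁.f p.1) (D₂.f p.2) * D₁.f'' p.1 ≤ 0 := mul_nonpos_of_nonneg_of_nonpos hF₁ hf1''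
      simp only [Ψ₁₁]
      linarith
  · refine le_min ?_ ?_
    · have t1 : 0 ≤ A.F₁₂₂ (D₁.f p.1) (D₂.f p.2) * (D₂.f' p.2) ^ 2 * (p.1 * D₁.f' p.1) :=
        mul_nonneg (mul_nonneg hF₁₂₂ hsq2) hw1
      have t2 : 0 ≤ A.F₁₂ (D₁.f p.1) (D₂.f p.2) * D₂.f'' p.2 * (p.1 * D₁.f' p.1) :=
        mul_nonneg (by nlinarith) hw1
      have t3 : A.F₂₂ (D₁.f p.1) (D₂.f p.2) * (D₂.f' p.2) ^ 2 ≤ 0 := mul_nonpos_of_nonpos_of_nonneg hF₂₂ hsq2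
      have t4 : A.F₂ (D₁.f p.1) (D₂.f p.2) * D₂.f'' p.2 ≤ 0 := mul_nonpos_of_nonneg_of_nonpos hF₂ hf2''
      simp only [Ψ₂₂, Ψ₁₂₂]
      nlinarith [t1, t2, t3, t4]
    · have t3 : A.F₂₂ (D₁.f p.1) (D₂.f p.2) * (D₂.f' p.2) ^ 2 ≤ 0 := mul_nonpos_of_nonpos_of_nonneg hF₂₂ hsq2
      have t4 : A.F₂ (D₁.f p.1) (D₂.f p.2) * D₂.f'' p.2 ≤ 0 := mul_nonpos_of_nonneg_of_nonpos hF₂ hf2''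
      simp only [Ψ₂₂]
      linarith
end

section
/- Let α > 1, Φ > 0, σ > 0 and 0 < λ ≤ 1/√(2α−1). Set m := α(α−1)λ²/(1−αλ²) and δ := (Φ/σ)·αλ(1−λ)^{α−1}(1+α/m)(1+λα/m)^{m−1}, and define the intrinsic PPR density ψ(y) := 1 − ((1−y/δ)⁺)^α (1 + (α/m)(y/δ))^m for y ≥ 0. Then: (i) ψ is nonnegative and ψ(0) = ψ'(0) = 0; (ii) ψ is continuously differentiable on [0,∞), nondecreasing, and bounded with sup ψ = 1; (iii) ψ'(y) − yψ''(y) ≥ 0 for every y ∈ (0,δ); (iv) ψ is concave on [δλ, ∞). -/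
open Set

/-!
Write `t = y / δ` and `a = α / m`. Then
`ψ' = (α / δ) (1 + a) t (1 - t)₊^(α - 1) (1 + a t)^(m - 1)` is nonnegative and vanishes for
`t ≥ 1`; the positive part keeps `ψ` of class `C¹` across `t = 1` because `α > 1`.
For `0 < t < 1`, `ψ' - y ψ''` is a positive multiple of
`(1 - t) (1 + a t) + a (α + m - 1) t² - 1 = t ((1 - t) (a - 1) + t (a (α + m - 1) - 1))`,
which is nonnegative because `m ≤ α`. Finally `ψ''` has the sign of `1 - a (α + m - 1) t²`,
and `m` is chosen so that `a (α + m - 1) λ² = 1`; so `ψ'` decreases on `[δ λ, δ]`, vanishes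
beyond `δ`, and `ψ` is concave on `[δ λ, ∞)`.
-/

namespace PPR

lemma hasDerivAt_max_zero_rpow {p : ℝ} (hp : 1 < p) (x : ℝ) :
    HasDerivAt (fun x : ℝ => max x 0 ^ p) (p * max x 0 ^ (p - 1)) x := by
  have hp0 : p ≠ 0 := by linarith
  have hp1 : p - 1 ≠ 0 := by linarith
  rcases lt_trichotomy x 0 with hx | rfl | hx
  · have hev : (fun x : ℝ => max x 0 ^ p) =ᶠ[nhds x] fun _ => 0 := by
      filter_upwards [Iio_mem_nhds hx] with y hy
      rw [max_eq_right hy.le, Real.zero_rpow hp0]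
    rw [max_eq_right hx.le, Real.zero_rpow hp1, mul_zero]
    exact (hasDerivAt_const x 0).congr_of_eventuallyEq hev
  · rw [max_self, Real.zero_rpow hp1, mul_zero]
    have hleft : HasDerivWithinAt (fun x : ℝ => max x 0 ^ p) 0 (Iic 0) 0 :=
      (hasDerivWithinAt_const 0 _ 0).congr
        (fun y hy => by rw [max_eq_right hy, Real.zero_rpow hp0])
        (by rw [max_self, Real.zero_rpow hp0])
    have hright : HasDerivWithinAt (fun x : ℝ => max x 0 ^ p) 0 (Ici 0) 0 := by
      have h := (Real.hasDerivAt_rpow_const (x := 0) (Or.inr hp.le)).hasDerivWithinAt (s := Ici 0)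
      rw [Real.zero_rpow hp1, mul_zero] at h
      exact h.congr (fun y hy => by rw [max_eq_left hy]) (by rw [max_self])
    simpa only [Iic_union_Ici, hasDerivWithinAt_univ] using hleft.union hright
  · have hev : (fun x : ℝ => max x 0 ^ p) =ᶠ[nhds x] fun y => y ^ p := by
      filter_upwards [Ioi_mem_nhds hx] with y hy
      rw [max_eq_left hy.le]
    rw [max_eq_left hx.le]
    exact (Real.hasDerivAt_rpow_const (Or.inl hx.ne')).congr_of_eventuallyEq hev

lemma max_zero_rpow_eq_mul {p : ℝ} (hp : 1 < p) (u : ℝ) :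
    max u 0 ^ p = max u 0 ^ (p - 1) * u := by
  rcases le_total u 0 with hu | hu
  · rw [max_eq_right hu, Real.zero_rpow (by linarith), Real.zero_rpow (by linarith), zero_mul]
  · rw [max_eq_left hu, ← Real.rpow_add_one' hu (by linarith), sub_add_cancel]

lemma one_le_one_sub_mul_one_add_add_mul_sq {a c t : ℝ} (ha : 1 ≤ a) (hc : 1 ≤ c)
    (ht₀ : 0 ≤ t) (ht₁ : t ≤ 1) : 1 ≤ (1 - t) * (1 + a * t) + c * t ^ 2 := by
  nlinarith [mul_nonneg (mul_nonneg ht₀ (sub_nonneg.2 ht₁)) (sub_nonneg.2 ha),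
    mul_nonneg (sq_nonneg t) (sub_nonneg.2 hc)]

noncomputable def density (α m δ y : ℝ) : ℝ :=
  1 - max (1 - y / δ) 0 ^ α * (1 + α / m * (y / δ)) ^ m

noncomputable def densityDeriv (α m δ y : ℝ) : ℝ :=
  α / δ * (1 + α / m) * (y / δ) * max (1 - y / δ) 0 ^ (α - 1) *
    (1 + α / m * (y / δ)) ^ (m - 1)

noncomputable def densityDeriv2 (α m δ y : ℝ) : ℝ :=
  α / δ ^ 2 * (1 + α / m) * max (1 - y / δ) 0 ^ (α - 2) *
    (1 + α / m * (y / δ)) ^ (m - 2) * (1 - α / m * (α + m - 1) * (y / δ) ^ 2)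

section density

variable {α m δ : ℝ}

lemma one_add_div_mul_div_pos (hα : 0 < α) (hm : 0 < m) (hδ : 0 < δ) {y : ℝ} (hy : 0 ≤ y) :
    0 < 1 + α / m * (y / δ) := by
  positivity

lemma hasDerivAt_one_add_div_mul_div_rpow (hα : 0 < α) (hm : 0 < m) (hδ : 0 < δ) {y : ℝ}
    (hy : 0 ≤ y) (q : ℝ) :
    HasDerivAt (fun x : ℝ => (1 + α / m * (x / δ)) ^ q)
      (α / m * (1 / δ) * q * (1 + α / m * (y / δ)) ^ (q - 1)) y :=
  ((((hasDerivAt_id y).div_const δ).const_mul (α / m)).const_add 1).rpow_const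
    (Or.inl (one_add_div_mul_div_pos hα hm hδ hy).ne')

lemma hasDerivAt_density (hα : 1 < α) (hm : 0 < m) (hδ : 0 < δ) {y : ℝ} (hy : 0 ≤ y) :
    HasDerivAt (density α m δ) (densityDeriv α m δ y) y := by
  have hα₀ : 0 < α := by linarith
  have hu : HasDerivAt (fun x => max (1 - x / δ) 0 ^ α)
      (α * max (1 - y / δ) 0 ^ (α - 1) * -(1 / δ)) y :=
    (hasDerivAt_max_zero_rpow hα _).comp y (((hasDerivAt_id y).div_const δ).const_sub 1)
  have hv := hasDerivAt_one_add_div_mul_div_rpow hα₀ hm hδ hy m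
  refine ((hu.mul hv).const_sub 1).congr_deriv ?_
  have hV := Real.rpow_add_one (one_add_div_mul_div_pos hα₀ hm hδ hy).ne' (m - 1)
  rw [sub_add_cancel] at hV
  rw [densityDeriv, max_zero_rpow_eq_mul hα, hV]
  field_simp
  ring

lemma densityDeriv_nonneg (hα : 0 < α) (hm : 0 < m) (hδ : 0 < δ) {y : ℝ} (hy : 0 ≤ y) :
    0 ≤ densityDeriv α m δ y := by
  have := one_add_div_mul_div_pos hα hm hδ hy
  unfold densityDeriv
  positivity

lemma densityDeriv_eq_zero (hα : 1 < α) (hδ : 0 < δ) {y : ℝ} (hy : δ ≤ y) :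
    densityDeriv α m δ y = 0 := by
  rw [densityDeriv, max_eq_right (sub_nonpos.2 ((one_le_div hδ).2 hy)),
    Real.zero_rpow (by linarith), mul_zero, zero_mul]

lemma continuousOn_densityDeriv (hα : 1 < α) (hm : 0 < m) (hδ : 0 < δ) :
    ContinuousOn (densityDeriv α m δ) (Ici 0) := by
  intro y hy
  have hM : ContinuousAt (fun x : ℝ => max (1 - x / δ) 0 ^ (α - 1)) y :=
    (by fun_prop : ContinuousAt (fun x : ℝ => max (1 - x / δ) 0) y).rpow_const
      (Or.inr (by linarith))
  have hV : ContinuousAt (fun x : ℝ => (1 + α / m * (x / δ)) ^ (m - 1)) y :=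
    (by fun_prop : ContinuousAt (fun x : ℝ => 1 + α / m * (x / δ)) y).rpow_const
      (Or.inl (one_add_div_mul_div_pos (by linarith) hm hδ hy).ne')
  exact (((continuousAt_const.mul (continuousAt_id.div_const δ)).mul hM).mul hV).continuousWithinAt

lemma hasDerivAt_densityDeriv (hα : 0 < α) (hm : 0 < m) (hδ : 0 < δ) {y : ℝ}
    (hy : y ∈ Ioo 0 δ) : HasDerivAt (densityDeriv α m δ) (densityDeriv2 α m δ y) y := by
  obtain ⟨hy₀, hyδ⟩ := hy
  have hU : 0 < 1 - y / δ := sub_pos.2 ((div_lt_one hδ).2 hyδ)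
  have hV : 0 < 1 + α / m * (y / δ) := one_add_div_mul_div_pos hα hm hδ hy₀.le
  have hev : densityDeriv α m δ =ᶠ[nhds y] fun x => α / δ * (1 + α / m) * (x / δ) *
      (1 - x / δ) ^ (α - 1) * (1 + α / m * (x / δ)) ^ (m - 1) := by
    filter_upwards [Iio_mem_nhds hyδ] with x hx
    rw [densityDeriv, max_eq_left (sub_nonneg.2 ((div_le_one hδ).2 hx.le))]
  have hu : HasDerivAt (fun x => (1 - x / δ) ^ (α - 1))
      (-(1 / δ) * (α - 1) * (1 - y / δ) ^ (α - 1 - 1)) y :=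
    (((hasDerivAt_id y).div_const δ).const_sub 1).rpow_const (Or.inl hU.ne')
  have ht : HasDerivAt (fun x => α / δ * (1 + α / m) * (x / δ))
      (α / δ * (1 + α / m) * (1 / δ)) y :=
    ((hasDerivAt_id y).div_const δ).const_mul _
  refine ((ht.mul hu).mul (hasDerivAt_one_add_div_mul_div_rpow hα hm hδ hy₀.le _)
    |>.congr_of_eventuallyEq hev).congr_deriv ?_
  have hU' := Real.rpow_add_one hU.ne' (α - 2)
  have hV' := Real.rpow_add_one hV.ne' (m - 2)
  rw [show α - 2 + 1 = α - 1 by ring] at hU'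
  rw [show m - 2 + 1 = m - 1 by ring] at hV'
  simp only [Pi.mul_apply]
  rw [densityDeriv2, max_eq_left hU.le, show α - 1 - 1 = α - 2 by ring,
    show m - 1 - 1 = m - 2 by ring, hU', hV']
  field_simp
  ring

lemma densityDeriv_sub_mul_densityDeriv2_nonneg (hα : 1 < α) (hm : 0 < m) (hmα : m ≤ α)
    (hδ : 0 < δ) {y : ℝ} (hy : y ∈ Ioo 0 δ) :
    0 ≤ densityDeriv α m δ y - y * densityDeriv2 α m δ y := by
  obtain ⟨hy₀, hyδ⟩ := hy
  have hα₀ : 0 < α := by linarith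
  have ht₁ : y / δ < 1 := (div_lt_one hδ).2 hyδ
  have hU : 0 < 1 - y / δ := sub_pos.2 ht₁
  have hV : 0 < 1 + α / m * (y / δ) := one_add_div_mul_div_pos hα₀ hm hδ hy₀.le
  have hU' := Real.rpow_add_one hU.ne' (α - 2)
  have hV' := Real.rpow_add_one hV.ne' (m - 2)
  rw [show α - 2 + 1 = α - 1 by ring] at hU'
  rw [show m - 2 + 1 = m - 1 by ring] at hV'
  have hfactor : densityDeriv α m δ y - y * densityDeriv2 α m δ y =
      α / δ * (1 + α / m) * (y / δ) * (1 - y / δ) ^ (α - 2) *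
        (1 + α / m * (y / δ)) ^ (m - 2) *
        ((1 - y / δ) * (1 + α / m * (y / δ)) + α / m * (α + m - 1) * (y / δ) ^ 2 - 1) := by
    rw [densityDeriv, densityDeriv2, max_eq_left hU.le, hU', hV']
    field_simp
    ring
  have ha : 1 ≤ α / m := (one_le_div hm).2 hmα
  have hc : 1 ≤ α / m * (α + m - 1) := by
    have : α / m * (α + m - 1) = α / m * (α - 1) + α := by field_simp; ring
    have : 0 ≤ α / m * (α - 1) := mul_nonneg (by positivity) (by linarith)
    linarith
  have hquad := one_le_one_sub_mul_one_add_add_mul_sq ha hc (by positivity) ht₁.le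
  have hUpow : 0 < (1 - y / δ) ^ (α - 2) := Real.rpow_pos_of_pos hU _
  rw [hfactor]
  exact mul_nonneg (by positivity) (sub_nonneg.2 hquad)

lemma densityDeriv2_nonpos (hα : 1 < α) (hm : 0 < m) (hδ : 0 < δ) {s : ℝ} (hs₀ : 0 ≤ s)
    (hs : 1 ≤ α / m * (α + m - 1) * s ^ 2) {y : ℝ} (hy : y ∈ Ioo (δ * s) δ) :
    densityDeriv2 α m δ y ≤ 0 := by
  have hα₀ : 0 < α := by linarith
  have hst : s ≤ y / δ := (le_div_iff₀ hδ).2 (by linarith [hy.1])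
  have hsq : 1 ≤ α / m * (α + m - 1) * (y / δ) ^ 2 := by
    have hc : 0 ≤ α / m * (α + m - 1) := mul_nonneg (by positivity) (by linarith)
    exact hs.trans (mul_le_mul_of_nonneg_left (pow_le_pow_left₀ hs₀ hst 2) hc)
  have hy₀ : 0 ≤ y := (mul_nonneg hδ.le hs₀).trans hy.1.le
  unfold densityDeriv2
  exact mul_nonpos_of_nonneg_of_nonpos (by positivity) (by linarith)

lemma continuousOn_density (hα : 1 < α) (hm : 0 < m) (hδ : 0 < δ) :
    ContinuousOn (density α m δ) (Ici 0) :=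
  fun _ hy => (hasDerivAt_density hα hm hδ hy).continuousAt.continuousWithinAt

lemma monotoneOn_density (hα : 1 < α) (hm : 0 < m) (hδ : 0 < δ) :
    MonotoneOn (density α m δ) (Ici 0) := by
  refine monotoneOn_of_hasDerivWithinAt_nonneg (convex_Ici 0) (continuousOn_density hα hm hδ)
    (fun y hy => (hasDerivAt_density hα hm hδ (interior_subset hy)).hasDerivWithinAt)
    (fun y hy => densityDeriv_nonneg (by linarith) hm hδ (interior_subset hy))

lemma antitoneOn_densityDeriv (hα : 1 < α) (hm : 0 < m) (hδ : 0 < δ) {s : ℝ} (hs₀ : 0 ≤ s)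
    (hs : 1 ≤ α / m * (α + m - 1) * s ^ 2) :
    AntitoneOn (densityDeriv α m δ) (Ici (δ * s)) := by
  have hα₀ : 0 < α := by linarith
  have hδs : 0 ≤ δ * s := mul_nonneg hδ.le hs₀
  have hIcc : AntitoneOn (densityDeriv α m δ) (Icc (δ * s) δ) := by
    refine antitoneOn_of_hasDerivWithinAt_nonpos (f' := densityDeriv2 α m δ) (convex_Icc _ _)
      ((continuousOn_densityDeriv hα hm hδ).mono fun y hy => hδs.trans hy.1) (fun y hy => ?_)
      (fun y hy => ?_) <;> rw [interior_Icc] at hy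
    · exact (hasDerivAt_densityDeriv hα₀ hm hδ ⟨hδs.trans_lt hy.1, hy.2⟩).hasDerivWithinAt
    · exact densityDeriv2_nonpos hα hm hδ hs₀ hs hy
  intro a ha b hb hab
  rcases le_or_gt b δ with hbδ | hδb
  · exact hIcc ⟨ha, hab.trans hbδ⟩ ⟨hb, hbδ⟩ hab
  · rw [densityDeriv_eq_zero hα hδ hδb.le]
    exact densityDeriv_nonneg hα₀ hm hδ (hδs.trans ha)

lemma concaveOn_density (hα : 1 < α) (hm : 0 < m) (hδ : 0 < δ) {s : ℝ} (hs₀ : 0 ≤ s)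
    (hs : 1 ≤ α / m * (α + m - 1) * s ^ 2) :
    ConcaveOn ℝ (Ici (δ * s)) (density α m δ) := by
  have hδs : 0 ≤ δ * s := mul_nonneg hδ.le hs₀
  have hderiv : ∀ y ∈ Ici (δ * s), HasDerivAt (density α m δ) (densityDeriv α m δ y) y :=
    fun y hy => hasDerivAt_density hα hm hδ (hδs.trans hy)
  refine AntitoneOn.concaveOn_of_deriv (convex_Ici _)
    (fun y hy => (hderiv y hy).continuousAt.continuousWithinAt)
    (fun y hy => (hderiv y (interior_subset hy)).differentiableAt.differentiableWithinAt) ?_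
  exact ((antitoneOn_densityDeriv hα hm hδ hs₀ hs).mono interior_subset).congr
    fun y hy => (hderiv y (interior_subset hy)).deriv.symm

lemma density_zero : density α m δ 0 = 0 := by
  simp [density]

lemma densityDeriv_zero : densityDeriv α m δ 0 = 0 := by
  simp [densityDeriv]

lemma density_self (hα : α ≠ 0) (hδ : δ ≠ 0) : density α m δ δ = 1 := by
  simp [density, div_self hδ, Real.zero_rpow hα]

lemma density_le_one (hα : 0 < α) (hm : 0 < m) (hδ : 0 < δ) {y : ℝ} (hy : 0 ≤ y) :
    density α m δ y ≤ 1 := by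
  have := one_add_div_mul_div_pos hα hm hδ hy
  rw [density, sub_le_self_iff]
  positivity

end density

noncomputable def shape (α lam : ℝ) : ℝ :=
  α * (α - 1) * lam ^ 2 / (1 - α * lam ^ 2)

section shape

variable {α lam : ℝ}

lemma mul_sq_le_one_of_le_one_div_sqrt {x : ℝ} (hx : 0 < x) (hlam : 0 < lam)
    (h : lam ≤ 1 / √x) : x * lam ^ 2 ≤ 1 := by
  rw [le_one_div hlam (Real.sqrt_pos.2 hx), Real.sqrt_le_left (by positivity), div_pow, one_pow,
    le_div_iff₀ (by positivity)] at h
  exact h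

lemma one_sub_mul_sq_pos (hα : 1 < α) (h : (2 * α - 1) * lam ^ 2 ≤ 1) :
    0 < 1 - α * lam ^ 2 := by
  nlinarith [sq_nonneg lam]

lemma shape_pos (hα : 1 < α) (hlam : 0 < lam) (h : (2 * α - 1) * lam ^ 2 ≤ 1) :
    0 < shape α lam := by
  have := one_sub_mul_sq_pos hα h
  have : 0 < α - 1 := by linarith
  unfold shape
  positivity

lemma shape_le (hα : 1 < α) (h : (2 * α - 1) * lam ^ 2 ≤ 1) :
    shape α lam ≤ α := by
  rw [shape, div_le_iff₀ (one_sub_mul_sq_pos hα h)]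
  nlinarith

lemma div_shape_mul_mul_sq (hα : 1 < α) (hlam : 0 < lam) (h : (2 * α - 1) * lam ^ 2 ≤ 1) :
    α / shape α lam * (α + shape α lam - 1) * lam ^ 2 = 1 := by
  have hpos := one_sub_mul_sq_pos hα h
  have hm := shape_pos hα hlam h
  have : α - 1 ≠ 0 := by linarith
  rw [shape] at hm ⊢
  field_simp
  ring

end shape

end PPR

open PPR

/-- properties of the intrinsic PPR one-dimensional density. -/
theorem statement15 (α Φ σ lam : ℝ) (hα : 1 < α) (hΦ : 0 < Φ) (hσ : 0 < σ)
    (hlam₀ : 0 < lam) (hlam : lam ≤ 1 / Real.sqrt (2 * α - 1)) :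
    let m : ℝ := α * (α - 1) * lam ^ 2 / (1 - α * lam ^ 2)
    let δ : ℝ := (Φ / σ) * (α * lam) * (1 - lam) ^ (α - 1) * (1 + α / m) *
      (1 + lam * α / m) ^ (m - 1)
    let ψ : ℝ → ℝ := fun y =>
      1 - (max (1 - y / δ) 0) ^ α * (1 + (α / m) * (y / δ)) ^ m
    let ψ' : ℝ → ℝ := fun y =>
      (α / δ) * (1 + α / m) * (y / δ) * (max (1 - y / δ) 0) ^ (α - 1) *
        (1 + (α / m) * (y / δ)) ^ (m - 1)
    let ψ'' : ℝ → ℝ := fun y =>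
      (α / δ ^ 2) * (1 + α / m) * (max (1 - y / δ) 0) ^ (α - 2) *
        (1 + (α / m) * (y / δ)) ^ (m - 2) *
        (1 - (α / m) * (α + m - 1) * (y / δ) ^ 2)
    -- (i)
    (∀ y : ℝ, 0 ≤ y → 0 ≤ ψ y) ∧ ψ 0 = 0 ∧ ψ' 0 = 0 ∧
    -- (ii)
    (∀ y : ℝ, 0 ≤ y → HasDerivAt ψ (ψ' y) y) ∧ ContinuousOn ψ' (Ici 0) ∧
    MonotoneOn ψ (Ici 0) ∧ (∀ y : ℝ, 0 ≤ y → ψ y ≤ 1) ∧ ψ δ = 1 ∧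
    -- (iii)
    (∀ y ∈ Ioo (0:ℝ) δ, HasDerivAt ψ' (ψ'' y) y ∧ 0 ≤ ψ' y - y * ψ'' y) ∧
    -- (iv)
    ConcaveOn ℝ (Ici (δ * lam)) ψ := by
  intro m δ ψ ψ' ψ''
  have hα₀ : 0 < α := by linarith
  have hquad := mul_sq_le_one_of_le_one_div_sqrt (by linarith) hlam₀ hlam
  have hm : 0 < m := shape_pos hα hlam₀ hquad
  have hlam₁ : 0 < 1 - lam := by nlinarith [one_sub_mul_sq_pos hα hquad]
  have hδ : 0 < δ := by
    have := Real.rpow_pos_of_pos hlam₁ (α - 1)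
    positivity
  have hψ₀ : ψ 0 = 0 := density_zero
  have hmono : MonotoneOn ψ (Ici 0) := monotoneOn_density hα hm hδ
  refine ⟨fun y hy => hψ₀ ▸ hmono self_mem_Ici hy hy, hψ₀, densityDeriv_zero,
    fun y hy => hasDerivAt_density hα hm hδ hy, continuousOn_densityDeriv hα hm hδ, hmono,
    fun y hy => density_le_one hα₀ hm hδ hy, density_self hα₀.ne' hδ.ne',
    fun y hy => ⟨hasDerivAt_densityDeriv hα₀ hm hδ hy,
      densityDeriv_sub_mul_densityDeriv2_nonneg hα hm (shape_le hα hquad) hδ hy⟩,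
    concaveOn_density hα hm hδ hlam₀.le (div_shape_mul_mul_sq hα hlam₀ hquad).ge⟩
end

section
/- Let ψ : [0,∞) → [0,∞) be a concave one-dimensional cohesive density with ψ'(0) > 0, and let ε > 0. Then there exists a unique z̄ > 0 satisfying z̄ = εψ'(z̄), and the function ψ_ε defined by ψ_ε(y) := y²/(2ε) for 0 ≤ y ≤ z̄ and ψ_ε(y) := ψ(y) − ψ(z̄) + z̄²/(2ε) for y > z̄ is again a one-dimensional cohesive density: it is nonnegative with ψ_ε(0) = 0, continuously differentiable on [0,∞) with locally Lipschitz derivative, bounded, Lipschitz, nondecreasing, satisfies ψ_ε'(y) − yψ_ε''(y) ≥ 0 for a.e. y > 0 and sup_{y>0} yψ_ε'(y) < ∞; moreover ψ_ε is concave on [z̄,∞). -/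
/-!
Concavity makes `f'` nonincreasing, so `y ↦ ε f'(y) - y` is strictly decreasing; it is
positive at `0` and, because `y f'(y)` is bounded, negative for large `y`: this gives `z̄`.
On `[0, ∞)` the derivative of `ψ_ε` equals `min (y / ε) (f' y)`: the two pieces cross exactly at
`z̄`. Hence it is continuous, locally Lipschitz, dominated by `f'`, and takes values in
`[0, z̄ / ε]`, which gives monotonicity and the Lipschitz bound by the mean value theorem. The
almost-everywhere conditions only concern points `y ≠ z̄`, where `ψ_ε` is locally one of the
two pieces.
-/

open MeasureTheory Set

open Filter

noncomputable def glueAt (z : ℝ) (u v : ℝ → ℝ) (y : ℝ) : ℝ := if y ≤ z then u y else v y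

section glueAt

variable {z y a : ℝ} {u v u' v' : ℝ → ℝ}

theorem glueAt_of_le (h : y ≤ z) : glueAt z u v y = u y := if_pos h

theorem glueAt_of_lt (h : z < y) : glueAt z u v y = v y := if_neg h.not_ge

theorem glueAt_of_ge (huv : u z = v z) (h : z ≤ y) : glueAt z u v y = v y := by
  rcases h.eq_or_lt with rfl | h
  · exact (glueAt_of_le le_rfl).trans huv
  · exact glueAt_of_lt h

theorem hasDerivAt_glueAt_of_lt (hy : y < z) (hu : HasDerivAt u a y) :
    HasDerivAt (glueAt z u v) a y :=
  hu.congr_of_eventuallyEq <| eventually_of_mem (Iio_mem_nhds hy) fun _ hx => glueAt_of_le hx.le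

theorem hasDerivAt_glueAt_of_gt (hy : z < y) (hv : HasDerivAt v a y) :
    HasDerivAt (glueAt z u v) a y :=
  hv.congr_of_eventuallyEq <| eventually_of_mem (Ioi_mem_nhds hy) fun _ hx => glueAt_of_lt hx

theorem hasDerivAt_glueAt (hu : ∀ y ≤ z, HasDerivAt u (u' y) y)
    (hv : ∀ y, z ≤ y → HasDerivAt v (v' y) y) (huv : u z = v z) (huv' : u' z = v' z) (y : ℝ) :
    HasDerivAt (glueAt z u v) (glueAt z u' v' y) y := by
  rcases lt_trichotomy y z with hy | rfl | hy
  · rw [glueAt_of_le hy.le]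
    exact hasDerivAt_glueAt_of_lt hy (hu y hy.le)
  · rw [glueAt_of_le le_rfl]
    have left : HasDerivWithinAt (glueAt y u v) (u' y) (Iic y) y :=
      (hu y le_rfl).hasDerivWithinAt.congr (fun _ hx => glueAt_of_le hx) (glueAt_of_le le_rfl)
    have right : HasDerivWithinAt (glueAt y u v) (u' y) (Ici y) y := by
      rw [huv']
      exact (hv y le_rfl).hasDerivWithinAt.congr (fun _ hx => glueAt_of_ge huv hx)
        (glueAt_of_ge huv le_rfl)
    simpa only [Iic_union_Ici, hasDerivWithinAt_univ] using left.union right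
  · rw [glueAt_of_lt hy]
    exact hasDerivAt_glueAt_of_gt hy (hv y hy.le)

end glueAt

theorem existsUnique_pos_eq_mul_of_antitoneOn {φ : ℝ → ℝ} {ε M : ℝ} (hε : 0 < ε)
    (hcont : ContinuousOn φ (Ici 0)) (hanti : AntitoneOn φ (Ici 0)) (h0 : 0 < φ 0)
    (hM : ∀ y, 0 < y → y * φ y ≤ M) :
    ∃! z, 0 < z ∧ z = ε * φ z := by
  -- `y ↦ ε φ y - y` is positive at `0` and negative at `B`, since `ε φ B ≤ ε M / B < B`.
  set B := |ε * M| + 1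
  have hB : 1 ≤ B := le_add_of_nonneg_left (abs_nonneg _)
  have hφB : ε * φ B < B := by
    have h := mul_le_mul_of_nonneg_left (hM B (by linarith)) hε.le
    nlinarith [le_abs_self (ε * M)]
  obtain ⟨c, hc, hfix⟩ : ∃ c ∈ Icc 0 B, ε * φ c - c = 0 :=
    intermediate_value_Icc' (f := fun y => ε * φ y - y) (by linarith)
      ((continuousOn_const.mul (hcont.mono Icc_subset_Ici_self)).sub continuousOn_id)
      ⟨by linarith, by linarith [mul_pos hε h0]⟩
  have hc0 : 0 < c := hc.1.lt_of_ne <| by rintro rfl; linarith [mul_pos hε h0]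
  refine ⟨c, ⟨hc0, by linarith⟩, fun w ⟨hw0, hw⟩ => ?_⟩
  have key : ∀ a b, 0 < a → a = ε * φ a → b = ε * φ b → a ≤ b → b ≤ a := by
    intro a b ha hfa hfb hab
    rw [hfa, hfb]
    exact mul_le_mul_of_nonneg_left (hanti ha.le (ha.le.trans hab) hab) hε.le
  rcases le_total w c with h | h
  · exact le_antisymm h (key w c hw0 hw (by linarith) h)
  · exact le_antisymm (key c w hc0 (by linarith) hw h) h

namespace CohesiveDensity

variable (D : CohesiveDensity) {ε z : ℝ}

theorem hasDerivWithinAt_Ici {x : ℝ} (hx : 0 ≤ x) :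
    HasDerivWithinAt D.f (D.f' x) (Ici 0) x := by
  rcases hx.eq_or_lt with rfl | hx
  · exact D.deriv_at0
  · exact (D.deriv_at x hx).hasDerivWithinAt

theorem derivWithin_Ici {x : ℝ} (hx : 0 ≤ x) : derivWithin D.f (Ici 0) x = D.f' x :=
  (D.hasDerivWithinAt_Ici hx).derivWithin (uniqueDiffOn_Ici 0 x hx)

theorem deriv_nonneg {x : ℝ} (hx : 0 ≤ x) : 0 ≤ D.f' x :=
  D.derivWithin_Ici hx ▸ D.mono.derivWithin_nonneg

theorem antitoneOn_deriv_of_concaveOn (hconc : ConcaveOn ℝ (Ici 0) D.f) :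
    AntitoneOn D.f' (Ici 0) := by
  intro x hx y hy hxy
  have h := hconc.antitoneOn_derivWithin
    (fun t ht => (D.hasDerivWithinAt_Ici ht).differentiableWithinAt) hx hy hxy
  rwa [D.derivWithin_Ici hx, D.derivWithin_Ici hy] at h

noncomputable def regFun (ε z : ℝ) : ℝ → ℝ :=
  glueAt z (fun y => y ^ 2 / (2 * ε)) (fun y => D.f y - D.f z + z ^ 2 / (2 * ε))

noncomputable def regDeriv (ε z : ℝ) : ℝ → ℝ := glueAt z (fun y => y / ε) D.f'

noncomputable def regSndDeriv (ε z : ℝ) : ℝ → ℝ := glueAt z (fun _ => 1 / ε) D.f''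

theorem regFun_of_ge {y : ℝ} (hy : z ≤ y) :
    D.regFun ε z y = D.f y - D.f z + z ^ 2 / (2 * ε) :=
  glueAt_of_ge (by ring) hy

theorem deriv_eq_div_of_eq_mul (hε : 0 < ε) (hfix : z = ε * D.f' z) : D.f' z = z / ε := by
  rw [eq_div_iff hε.ne']
  linarith

theorem hasDerivAt_regFun (hε : 0 < ε) (hz : 0 < z) (hfix : z = ε * D.f' z) (y : ℝ) :
    HasDerivAt (D.regFun ε z) (D.regDeriv ε z y) y := by
  refine hasDerivAt_glueAt (fun y _ => ?_) (fun y hy => ?_) (by ring) ?_ y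
  · exact ((hasDerivAt_pow 2 y).div_const (2 * ε)).congr_deriv (by field_simp; norm_num)
  · exact ((D.deriv_at y (hz.trans_le hy)).sub_const _).add_const _
  · exact (D.deriv_eq_div_of_eq_mul hε hfix).symm

theorem regDeriv_eq_min (hconc : ConcaveOn ℝ (Ici 0) D.f) (hε : 0 < ε) (hz : 0 < z)
    (hfix : z = ε * D.f' z) {y : ℝ} (hy : 0 ≤ y) :
    D.regDeriv ε z y = min (y / ε) (D.f' y) := by
  have hz' := D.deriv_eq_div_of_eq_mul hε hfix
  have hanti := D.antitoneOn_deriv_of_concaveOn hconc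
  rcases le_or_gt y z with h | h
  · rw [regDeriv, glueAt_of_le h, min_eq_left]
    calc y / ε ≤ z / ε := by gcongr
      _ = D.f' z := hz'.symm
      _ ≤ D.f' y := hanti (mem_Ici.2 hy) (mem_Ici.2 hz.le) h
  · rw [regDeriv, glueAt_of_lt h, min_eq_right]
    calc D.f' y ≤ D.f' z := hanti (mem_Ici.2 hz.le) (mem_Ici.2 hy) h.le
      _ = z / ε := hz'
      _ ≤ y / ε := by gcongr

theorem regDeriv_mem_Icc (hconc : ConcaveOn ℝ (Ici 0) D.f) (hε : 0 < ε) (hz : 0 < z)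
    (hfix : z = ε * D.f' z) {y : ℝ} (hy : 0 ≤ y) :
    D.regDeriv ε z y ∈ Icc 0 (z / ε) := by
  rw [D.regDeriv_eq_min hconc hε hz hfix hy]
  refine ⟨le_min (by positivity) (D.deriv_nonneg hy), ?_⟩
  rcases le_or_gt y z with h | h
  · exact (min_le_left _ _).trans (by gcongr)
  · calc _ ≤ D.f' y := min_le_right _ _
      _ ≤ D.f' z :=
        D.antitoneOn_deriv_of_concaveOn hconc (mem_Ici.2 hz.le) (mem_Ici.2 hy) h.le
      _ = z / ε := D.deriv_eq_div_of_eq_mul hε hfix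

theorem regFun_zero (hz : 0 ≤ z) : D.regFun ε z 0 = 0 := by
  rw [regFun, glueAt_of_le hz]
  simp

theorem monotoneOn_regFun (hconc : ConcaveOn ℝ (Ici 0) D.f) (hε : 0 < ε) (hz : 0 < z)
    (hfix : z = ε * D.f' z) : MonotoneOn (D.regFun ε z) (Ici 0) :=
  monotoneOn_of_hasDerivWithinAt_nonneg (convex_Ici 0)
    (fun t _ => (D.hasDerivAt_regFun hε hz hfix t).continuousAt.continuousWithinAt)
    (fun t _ => (D.hasDerivAt_regFun hε hz hfix t).hasDerivWithinAt)
    fun _ ht => (D.regDeriv_mem_Icc hconc hε hz hfix (interior_subset ht)).1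

theorem regFun_bounded (hconc : ConcaveOn ℝ (Ici 0) D.f) (hε : 0 < ε) (hz : 0 < z)
    (hfix : z = ε * D.f' z) : ∃ M, ∀ y, 0 ≤ y → D.regFun ε z y ≤ M := by
  obtain ⟨M, hM⟩ := D.bounded
  refine ⟨M - D.f z + z ^ 2 / (2 * ε), fun y hy => ?_⟩
  have hyz : 0 ≤ max y z := hy.trans (le_max_left y z)
  calc D.regFun ε z y ≤ D.regFun ε z (max y z) :=
        D.monotoneOn_regFun hconc hε hz hfix hy hyz (le_max_left y z)
    _ = D.f (max y z) - D.f z + z ^ 2 / (2 * ε) := D.regFun_of_ge (le_max_right y z)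
    _ ≤ M - D.f z + z ^ 2 / (2 * ε) := by linarith [hM _ hyz]

theorem regFun_lip (hconc : ConcaveOn ℝ (Ici 0) D.f) (hε : 0 < ε) (hz : 0 < z)
    (hfix : z = ε * D.f' z) :
    ∃ L, ∀ x, 0 ≤ x → ∀ y, 0 ≤ y → |D.regFun ε z x - D.regFun ε z y| ≤ L * |x - y| := by
  refine ⟨z / ε, fun x hx y hy => ?_⟩
  have hbound : ∀ t ∈ Ici (0 : ℝ), ‖D.regDeriv ε z t‖ ≤ z / ε := fun t ht => by
    obtain ⟨h0, hle⟩ := D.regDeriv_mem_Icc hconc hε hz hfix ht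
    rwa [Real.norm_eq_abs, abs_of_nonneg h0]
  simpa only [Real.norm_eq_abs] using (convex_Ici 0).norm_image_sub_le_of_norm_hasDerivWithin_le
    (fun t _ => (D.hasDerivAt_regFun hε hz hfix t).hasDerivWithinAt) hbound
    (mem_Ici.2 hy) (mem_Ici.2 hx)

theorem continuousOn_regDeriv (hconc : ConcaveOn ℝ (Ici 0) D.f) (hε : 0 < ε) (hz : 0 < z)
    (hfix : z = ε * D.f' z) : ContinuousOn (D.regDeriv ε z) (Ici 0) :=
  ((continuous_id.div_const ε).continuousOn.inf D.deriv_cont).congr fun _ hy =>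
    D.regDeriv_eq_min hconc hε hz hfix hy

theorem regDeriv_locLip (hconc : ConcaveOn ℝ (Ici 0) D.f) (hε : 0 < ε) (hz : 0 < z)
    (hfix : z = ε * D.f' z) {b : ℝ} (hb : 0 < b) :
    ∃ L, ∀ x ∈ Icc (0 : ℝ) b, ∀ y ∈ Icc (0 : ℝ) b,
      |D.regDeriv ε z x - D.regDeriv ε z y| ≤ L * |x - y| := by
  obtain ⟨L, hL⟩ := D.deriv_locLip b hb
  refine ⟨max ε⁻¹ L, fun x hx y hy => ?_⟩
  rw [D.regDeriv_eq_min hconc hε hz hfix hx.1, D.regDeriv_eq_min hconc hε hz hfix hy.1,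
    max_mul_of_nonneg _ _ (abs_nonneg _)]
  calc _ ≤ max |x / ε - y / ε| |D.f' x - D.f' y| := abs_min_sub_min_le_max _ _ _ _
    _ ≤ max (ε⁻¹ * |x - y|) (L * |x - y|) := by
      refine max_le_max (le_of_eq ?_) (hL x hx y hy)
      rw [← sub_div, abs_div, abs_of_pos hε, div_eq_inv_mul]

theorem mul_regDeriv_le (hconc : ConcaveOn ℝ (Ici 0) D.f) (hε : 0 < ε) (hz : 0 < z)
    (hfix : z = ε * D.f' z) : ∃ M, ∀ y, 0 < y → y * D.regDeriv ε z y ≤ M := by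
  obtain ⟨M, hM⟩ := D.psi_b
  refine ⟨M, fun y hy => ?_⟩
  rw [D.regDeriv_eq_min hconc hε hz hfix hy.le]
  exact (mul_le_mul_of_nonneg_left (min_le_right _ _) hy.le).trans (hM y hy)

theorem ae_hasDerivAt_regDeriv :
    ∀ᵐ y, 0 < y → HasDerivAt (D.regDeriv ε z) (D.regSndDeriv ε z y) y := by
  filter_upwards [D.snd_deriv_ae, volume.ae_ne z] with y hf'' hyz hy
  rcases hyz.lt_or_gt with h | h
  · rw [regSndDeriv, glueAt_of_le h.le]
    exact hasDerivAt_glueAt_of_lt h ((hasDerivAt_id y).div_const ε)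
  · rw [regSndDeriv, glueAt_of_lt h]
    exact hasDerivAt_glueAt_of_gt h (hf'' hy)

theorem ae_regDeriv_sub_mul_regSndDeriv_nonneg :
    ∀ᵐ y, 0 < y → 0 ≤ D.regDeriv ε z y - y * D.regSndDeriv ε z y := by
  filter_upwards [D.psi_a, volume.ae_ne z] with y hψ hyz hy
  rcases hyz.lt_or_gt with h | h
  · rw [regDeriv, regSndDeriv, glueAt_of_le h.le, glueAt_of_le h.le, mul_one_div, sub_self]
  · rw [regDeriv, regSndDeriv, glueAt_of_lt h, glueAt_of_lt h]
    exact hψ hy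

theorem concaveOn_regFun (hconc : ConcaveOn ℝ (Ici 0) D.f) (hz : 0 ≤ z) :
    ConcaveOn ℝ (Ici z) (D.regFun ε z) :=
  ((hconc.subset (Ici_subset_Ici.2 hz) (convex_Ici z)).add_const
    (z ^ 2 / (2 * ε) - D.f z)).congr fun y hy => by
      rw [D.regFun_of_ge hy, Pi.add_apply]
      ring

noncomputable def regularization (hconc : ConcaveOn ℝ (Ici 0) D.f) (hε : 0 < ε) (hz : 0 < z)
    (hfix : z = ε * D.f' z) : CohesiveDensity where
  f := D.regFun ε z
  f' := D.regDeriv ε z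
  f'' := D.regSndDeriv ε z
  nonneg _ hy :=
    D.regFun_zero hz.le ▸ D.monotoneOn_regFun hconc hε hz hfix (mem_Ici.2 le_rfl) hy hy
  zero := D.regFun_zero hz.le
  deriv_at y _ := D.hasDerivAt_regFun hε hz hfix y
  deriv_at0 := (D.hasDerivAt_regFun hε hz hfix 0).hasDerivWithinAt
  deriv_cont := D.continuousOn_regDeriv hconc hε hz hfix
  deriv_locLip _ hb := D.regDeriv_locLip hconc hε hz hfix hb
  bounded := D.regFun_bounded hconc hε hz hfix
  lip := D.regFun_lip hconc hε hz hfix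
  mono := D.monotoneOn_regFun hconc hε hz hfix
  snd_deriv_ae := D.ae_hasDerivAt_regDeriv
  psi_a := D.ae_regDeriv_sub_mul_regSndDeriv_nonneg
  psi_b := D.mul_regDeriv_le hconc hε hz hfix

end CohesiveDensity

/-- given a concave one-dimensional cohesive density `ψ` with `ψ'(0) > 0`
and `ε > 0`, there is a unique `z̄ > 0` with `z̄ = εψ'(z̄)`, and the intrinsic
regularization `ψ_ε` (quadratic on `[0,z̄]`, shifted `ψ` beyond) is again a
one-dimensional cohesive density, concave on `[z̄,∞)`. -/
theorem statement19 (D : CohesiveDensity) (hconc : ConcaveOn ℝ (Ici 0) D.f)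
    (hpos : 0 < D.f' 0) (ε : ℝ) (hε : 0 < ε) :
    (∃! z : ℝ, 0 < z ∧ z = ε * D.f' z) ∧
    ∀ z : ℝ, 0 < z → z = ε * D.f' z →
      let g : ℝ → ℝ := fun y =>
        if y ≤ z then y ^ 2 / (2 * ε) else D.f y - D.f z + z ^ 2 / (2 * ε)
      let g' : ℝ → ℝ := fun y => if y ≤ z then y / ε else D.f' y
      let g'' : ℝ → ℝ := fun y => if y ≤ z then 1 / ε else D.f'' y
      (∀ y : ℝ, 0 ≤ y → 0 ≤ g y) ∧ g 0 = 0 ∧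
      (∀ y : ℝ, 0 < y → HasDerivAt g (g' y) y) ∧
      HasDerivWithinAt g (g' 0) (Ici 0) 0 ∧
      ContinuousOn g' (Ici 0) ∧
      (∀ b : ℝ, 0 < b → ∃ L : ℝ, ∀ x ∈ Icc (0:ℝ) b, ∀ y ∈ Icc (0:ℝ) b,
        |g' x - g' y| ≤ L * |x - y|) ∧
      (∃ M : ℝ, ∀ y : ℝ, 0 ≤ y → g y ≤ M) ∧
      (∃ L : ℝ, ∀ x : ℝ, 0 ≤ x → ∀ y : ℝ, 0 ≤ y → |g x - g y| ≤ L * |x - y|) ∧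
      MonotoneOn g (Ici 0) ∧
      (∀ᵐ y ∂(volume : Measure ℝ), 0 < y → HasDerivAt g' (g'' y) y) ∧
      (∀ᵐ y ∂(volume : Measure ℝ), 0 < y → 0 ≤ g' y - y * g'' y) ∧
      (∃ M : ℝ, ∀ y : ℝ, 0 < y → y * g' y ≤ M) ∧
      ConcaveOn ℝ (Ici z) g := by
  obtain ⟨M, hM⟩ := D.psi_b
  refine ⟨existsUnique_pos_eq_mul_of_antitoneOn hε D.deriv_cont
    (D.antitoneOn_deriv_of_concaveOn hconc) hpos hM, fun z hz hfix => ?_⟩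
  let R := D.regularization hconc hε hz hfix
  exact ⟨R.nonneg, R.zero, R.deriv_at, R.deriv_at0, R.deriv_cont, R.deriv_locLip, R.bounded,
    R.lip, R.mono, R.snd_deriv_ae, R.psi_a, R.psi_b, D.concaveOn_regFun hconc hz.le⟩
end
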